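/- arXiv:1202.0023 — 7 statements merged into one kernel-verified Lean document; each statement's English description precedes it below -/
import Mathlib

section
/- Let α be an interval t-coloring of Q_n and for 0 ≤ k ≤ n−1 let sp_{α,k} be the maximum of |α(e)−α(e')| over all pairs of edges e, e' at distance k. Then for every 1 ≤ k ≤ n−1, sp_{α,k} ≤ sp_{α,k−1} + n − k. -/
open SimpleGraph

/-- `c` is an interval `t`-coloring of `G`: a proper edge-coloring with colors
`1,…,t`, every color used, and for each vertex the incident colors form an
interval of consecutive integers. -/
def IsIntervalColoring {V : Type*} (G : SimpleGraph V) (t : ℕ) (c : Sym2 V → ℕ) : Prop :=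
  (∀ e ∈ G.edgeSet, c e ∈ Finset.Icc 1 t) ∧
  (∀ e₁ ∈ G.edgeSet, ∀ e₂ ∈ G.edgeSet, e₁ ≠ e₂ → (∃ v, v ∈ e₁ ∧ v ∈ e₂) → c e₁ ≠ c e₂) ∧
  (∀ k ∈ Finset.Icc 1 t, ∃ e ∈ G.edgeSet, c e = k) ∧
  (∀ v : V, ∀ k₁ k₂ k : ℕ,
    (∃ e ∈ G.edgeSet, v ∈ e ∧ c e = k₁) → (∃ e ∈ G.edgeSet, v ∈ e ∧ c e = k₂) →
      k₁ ≤ k → k ≤ k₂ → ∃ e ∈ G.edgeSet, v ∈ e ∧ c e = k)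

def HasIntervalColoring {V : Type*} (G : SimpleGraph V) (t : ℕ) : Prop :=
  ∃ c : Sym2 V → ℕ, IsIntervalColoring G t c

/-- `W G`: the greatest number of colors in an interval coloring of `G`. -/
noncomputable def Wsup {V : Type*} (G : SimpleGraph V) : ℕ :=
  sSup {t | HasIntervalColoring G t}

/-- `w G`: the least number of colors in an interval coloring of `G`. -/
noncomputable def wlow {V : Type*} (G : SimpleGraph V) : ℕ :=
  sInf {t | HasIntervalColoring G t}

/-- The `n`-dimensional hypercube `Q_n`. -/
def hypercube (n : ℕ) : SimpleGraph (Fin n → Bool) where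
  Adj u v := ∃! i, u i ≠ v i
  symm := by
    constructor
    rintro u v ⟨i, hi, hu⟩
    exact ⟨i, fun h => hi h.symm, fun j hj => hu j fun h => hj h.symm⟩
  loopless := by constructor; rintro u ⟨i, hi, -⟩; exact hi rfl

/-- The distance between two edges: the minimum distance between endpoints. -/
noncomputable def edgeDist {V : Type*} (G : SimpleGraph V) (e e' : Sym2 V) : ℕ :=
  sInf {d | ∃ u ∈ e, ∃ v ∈ e', G.dist u v = d}

section Aux

lemma ham_def {n : ℕ} (u v : Fin n → Bool) :
    hammingDist u v = (Finset.univ.filter (fun j => u j ≠ v j)).card := rfl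

lemma adj_ham {n : ℕ} {u w : Fin n → Bool} (h : (hypercube n).Adj u w) :
    hammingDist u w = 1 := by
  obtain ⟨i, hi, huniq⟩ := h
  rw [ham_def, Finset.card_eq_one]
  refine ⟨i, ?_⟩
  ext j
  simp only [Finset.mem_filter, Finset.mem_univ, true_and, Finset.mem_singleton]
  exact ⟨fun hj => huniq j hj, fun hj => hj ▸ hi⟩

lemma hyper_adj {n : ℕ} {u v : Fin n → Bool} (i : Fin n) (h : u i ≠ v i) :
    (hypercube n).Adj v (Function.update v i (u i)) := by
  refine ⟨i, by simp [Ne.symm h], fun j hj => ?_⟩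
  by_contra hne
  simp only [Function.update_of_ne hne] at hj
  exact hj rfl

lemma hamming_update {n : ℕ} (u v : Fin n → Bool) (i : Fin n) (h : u i ≠ v i) :
    hammingDist u (Function.update v i (u i)) = hammingDist u v - 1 := by
  rw [ham_def, ham_def]
  have : (Finset.univ.filter (fun j => u j ≠ Function.update v i (u i) j)) =
      (Finset.univ.filter (fun j => u j ≠ v j)).erase i := by
    ext j
    by_cases hj : j = i <;>
      simp [hj, Function.update_of_ne, Finset.mem_erase, h]
  rw [this, Finset.card_erase_of_mem (by simp [h])]

lemma exists_walk_ham {n : ℕ} (u v : Fin n → Bool) :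
    ∃ p : (hypercube n).Walk u v, p.length = hammingDist u v := by
  generalize hd : hammingDist u v = d
  induction d generalizing v with
  | zero => obtain rfl := eq_of_hammingDist_eq_zero hd; exact ⟨Walk.nil, rfl⟩
  | succ d ih =>
    have hne : ∃ i, u i ≠ v i := by
      by_contra h
      push_neg at h
      rw [show u = v from funext h, hammingDist_self] at hd
      omega
    obtain ⟨i, hi⟩ := hne
    have h1 : hammingDist u (Function.update v i (u i)) = d := by
      rw [hamming_update u v i hi, hd]
      omega
    obtain ⟨p, hp⟩ := ih _ h1
    exact ⟨p.concat (hyper_adj i hi).symm, by rw [Walk.length_concat, hp]⟩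

lemma walk_ham {n : ℕ} {u v : Fin n → Bool} (p : (hypercube n).Walk u v) :
    hammingDist u v ≤ p.length := by
  induction p with
  | nil => simp [hammingDist_self]
  | @cons a b d h p ih =>
    calc hammingDist a d ≤ hammingDist a b + hammingDist b d := hammingDist_triangle _ _ _
    _ ≤ 1 + p.length := by rw [adj_ham h]; omega
    _ = (Walk.cons h p).length := by rw [Walk.length_cons]; omega

lemma hyperdist {n : ℕ} (u v : Fin n → Bool) :
    (hypercube n).dist u v = hammingDist u v := by
  obtain ⟨p, hp⟩ := exists_walk_ham u v
  refine le_antisymm (hp ▸ SimpleGraph.dist_le p) ?_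
  obtain ⟨q, hq⟩ := (Reachable.exists_walk_length_eq_dist ⟨p⟩ : _)
  exact hq ▸ walk_ham q

lemma edge_eq {V : Type*} {G : SimpleGraph V} {e : Sym2 V} {v : V}
    (he : e ∈ G.edgeSet) (hv : v ∈ e) : ∃ w, e = s(v, w) ∧ G.Adj v w := by
  induction e with
  | _ x y =>
    rw [Sym2.mem_iff] at hv
    rcases hv with rfl | rfl
    · exact ⟨y, rfl, he⟩
    · exact ⟨x, Sym2.eq_swap, (G.mem_edgeSet.mp he).symm⟩

open Classical in
lemma incident_card {n : ℕ} (v : Fin n → Bool) :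
    (Finset.univ.filter
      (fun g : Sym2 (Fin n → Bool) => g ∈ (hypercube n).edgeSet ∧ v ∈ g)).card ≤ n := by
  classical
  have hsub : (Finset.univ.filter
      (fun g : Sym2 (Fin n → Bool) => g ∈ (hypercube n).edgeSet ∧ v ∈ g)) ⊆
      Finset.univ.image (fun i : Fin n => s(v, Function.update v i (!(v i)))) := by
    intro g hg
    rw [Finset.mem_filter] at hg
    obtain ⟨w, rfl, hadj⟩ := edge_eq hg.2.1 hg.2.2
    obtain ⟨i, hi, huniq⟩ := hadj
    rw [Finset.mem_image]
    refine ⟨i, Finset.mem_univ i, ?_⟩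
    rw [Sym2.congr_right]
    funext j
    by_cases hj : j = i
    · subst hj
      rw [Function.update_self]
      revert hi; cases v j <;> cases w j <;> simp
    · rw [Function.update_of_ne hj]
      by_contra hne
      exact hj (huniq j hne)
  calc _ ≤ _ := Finset.card_le_card hsub
  _ ≤ (Finset.univ : Finset (Fin n)).card := Finset.card_image_le
  _ = n := by simp

open Classical in
lemma key {n t : ℕ} {c : Sym2 (Fin n → Bool) → ℕ}
    (hc : IsIntervalColoring (hypercube n) t c) {k : ℕ} (hk1 : 1 ≤ k) (hk2 : k ≤ n - 1)
    {e e' : Sym2 (Fin n → Bool)} (he : e ∈ (hypercube n).edgeSet)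
    (he' : e' ∈ (hypercube n).edgeSet) (hd : edgeDist (hypercube n) e e' = k) :
    ∃ f ∈ (hypercube n).edgeSet, edgeDist (hypercube n) e f = k - 1 ∧
      ((c e' : ℤ) - c f).natAbs ≤ n - k := by
  classical
  have hn : 2 ≤ n := by omega
  have hd' : sInf {d | ∃ a ∈ e, ∃ b ∈ e', (hypercube n).dist a b = d} = k := hd
  obtain ⟨u, hu, v, hv, huv⟩ : ∃ a ∈ e, ∃ b ∈ e', (hypercube n).dist a b = k := by
    rw [← hd']
    have hnonempty : {d | ∃ a ∈ e, ∃ b ∈ e', (hypercube n).dist a b = d}.Nonempty :=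
      ⟨_, e.out.1, Sym2.out_fst_mem e, e'.out.1, Sym2.out_fst_mem e', rfl⟩
    exact Nat.sInf_mem hnonempty
  have hlow : ∀ a ∈ e, k ≤ hammingDist a v := by
    intro a ha
    rw [← hyperdist, ← hd']
    exact Nat.sInf_le ⟨a, ha, v, hv, rfl⟩
  have huv' : hammingDist u v = k := by rw [← hyperdist]; exact huv
  set D := Finset.univ.filter (fun j => u j ≠ v j) with hDdef
  have hDcard : D.card = k := by rw [← ham_def]; exact huv'
  set w := fun i : Fin n => Function.update v i (u i) with hwdef
  set f := fun i : Fin n => s(v, w i) with hfdef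
  have hDi : ∀ i ∈ D, u i ≠ v i := fun i hi => (Finset.mem_filter.mp hi).2
  have hadj : ∀ i ∈ D, (hypercube n).Adj v (w i) := fun i hi => hyper_adj i (hDi i hi)
  have hfE : ∀ i ∈ D, f i ∈ (hypercube n).edgeSet := fun i hi =>
    (hypercube n).mem_edgeSet.mpr (hadj i hi)
  have hfd : ∀ i ∈ D, edgeDist (hypercube n) e (f i) = k - 1 := by
    intro i hi
    have hham : hammingDist u (w i) = k - 1 := by
      rw [hwdef, hamming_update u v i (hDi i hi), huv']
    refine le_antisymm (Nat.sInf_le ⟨u, hu, w i, Sym2.mem_mk_right v (w i), ?_⟩) ?_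
    · rw [hyperdist, hham]
    · refine le_csInf ⟨_, u, hu, w i, Sym2.mem_mk_right v (w i), rfl⟩ ?_
      rintro d ⟨a, ha, b, hb, rfl⟩
      rcases Sym2.mem_iff.mp hb with rfl | rfl
      · have := hlow a ha
        rw [hyperdist]
        omega
      · have h1 := hammingDist_triangle a (w i) v
        have h2 : hammingDist (w i) v = 1 := by
          rw [hammingDist_comm]
          exact adj_ham (hadj i hi)
        have h3 := hlow a ha
        rw [hyperdist]
        omega
  set I := Finset.univ.filter
      (fun g : Sym2 (Fin n → Bool) => g ∈ (hypercube n).edgeSet ∧ v ∈ g) with hIdef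
  set S := I.image c with hSdef
  have hSmem : ∀ x, x ∈ S ↔ ∃ g ∈ (hypercube n).edgeSet, v ∈ g ∧ c g = x := by
    intro x
    simp only [hSdef, hIdef, Finset.mem_image, Finset.mem_filter, Finset.mem_univ, true_and]
    constructor
    · rintro ⟨g, ⟨h1, h2⟩, h3⟩; exact ⟨g, h1, h2, h3⟩
    · rintro ⟨g, h1, h2, h3⟩; exact ⟨g, ⟨h1, h2⟩, h3⟩
  have hSne : S.Nonempty := ⟨c e', (hSmem _).mpr ⟨e', he', hv, rfl⟩⟩
  set L := S.min' hSne with hLdef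
  set R := S.max' hSne with hRdef
  have hIcc : Finset.Icc L R ⊆ S := by
    intro x hx
    rw [Finset.mem_Icc] at hx
    exact (hSmem x).mpr (hc.2.2.2 v L R x ((hSmem L).mp (S.min'_mem hSne))
      ((hSmem R).mp (S.max'_mem hSne)) hx.1 hx.2)
  have hRL : R + 1 - L ≤ n := by
    have h1 := Finset.card_le_card hIcc
    rw [Nat.card_Icc] at h1
    have h2 : S.card ≤ I.card := Finset.card_image_le
    have h3 := incident_card v
    rw [← hIdef] at h3
    omega
  have hwne : ∀ i ∈ D, ∀ j ∈ D, i ≠ j → f i ≠ f j := by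
    intro i hi j hj hij hfij
    rw [hfdef, Sym2.eq_iff] at hfij
    rcases hfij with ⟨-, h⟩ | ⟨h, -⟩
    · have h1 : w i i = u i := Function.update_self i (u i) v
      have h2 : w j i = v i := Function.update_of_ne hij (u j) v
      rw [h] at h1
      rw [h2] at h1
      exact hDi i hi h1.symm
    · have h1 : w j j = u j := Function.update_self j (u j) v
      rw [← h] at h1
      exact hDi j hj h1.symm
  set T := D.image (fun i => c (f i)) with hTdef
  have hTcard : T.card = k := by
    rw [hTdef, Finset.card_image_of_injOn, hDcard]
    intro i hi j hj hcij
    by_contra hij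
    exact hc.2.1 (f i) (hfE i hi) (f j) (hfE j hj) (hwne i hi j hj hij)
      ⟨v, Sym2.mem_mk_left v (w i), Sym2.mem_mk_left v (w j)⟩ hcij
  have hTS : ∀ x ∈ T, L ≤ x ∧ x ≤ R := by
    intro x hx
    obtain ⟨i, hi, rfl⟩ := Finset.mem_image.mp hx
    have : c (f i) ∈ S := (hSmem _).mpr ⟨f i, hfE i hi, Sym2.mem_mk_left v (w i), rfl⟩
    exact ⟨S.min'_le _ this, S.le_max' _ this⟩
  have hceS : L ≤ c e' ∧ c e' ≤ R := by
    have : c e' ∈ S := (hSmem _).mpr ⟨e', he', hv, rfl⟩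
    exact ⟨S.min'_le _ this, S.le_max' _ this⟩
  have hL1 : 1 ≤ L := by
    obtain ⟨g, hg1, -, hg3⟩ := (hSmem L).mp (S.min'_mem hSne)
    have := hc.1 g hg1
    rw [Finset.mem_Icc] at this
    omega
  by_contra hcon
  push_neg at hcon
  have hfar : ∀ i ∈ D, n - k < ((c e' : ℤ) - c (f i)).natAbs := fun i hi =>
    hcon (f i) (hfE i hi) (hfd i hi)
  have hsub : T ⊆ Finset.Icc L (c e' - (n - k + 1)) ∪ Finset.Icc (c e' + (n - k) + 1) R := by
    intro x hx
    obtain ⟨i, hi, rfl⟩ := Finset.mem_image.mp hx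
    have h1 := hfar i hi
    have h2 := hTS _ hx
    simp only [Finset.mem_union, Finset.mem_Icc]
    omega
  have hcard := (Finset.card_le_card hsub).trans (Finset.card_union_le _ _)
  rw [Nat.card_Icc, Nat.card_Icc, hTcard] at hcard
  obtain ⟨hce1, hce2⟩ := hceS
  omega

end Aux

theorem stmt2 (n t : ℕ) (c : Sym2 (Fin n → Bool) → ℕ)
    (hc : IsIntervalColoring (hypercube n) t c) (k : ℕ) (hk1 : 1 ≤ k) (hk2 : k ≤ n - 1) :
    sSup {d | ∃ e ∈ (hypercube n).edgeSet, ∃ e' ∈ (hypercube n).edgeSet,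
        edgeDist (hypercube n) e e' = k ∧ d = ((c e : ℤ) - c e').natAbs} ≤
      sSup {d | ∃ e ∈ (hypercube n).edgeSet, ∃ e' ∈ (hypercube n).edgeSet,
        edgeDist (hypercube n) e e' = k - 1 ∧ d = ((c e : ℤ) - c e').natAbs} + (n - k) := by
  classical
  set Sk := {d | ∃ e ∈ (hypercube n).edgeSet, ∃ e' ∈ (hypercube n).edgeSet,
      edgeDist (hypercube n) e e' = k ∧ d = ((c e : ℤ) - c e').natAbs} with hSk
  set Sk' := {d | ∃ e ∈ (hypercube n).edgeSet, ∃ e' ∈ (hypercube n).edgeSet,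
      edgeDist (hypercube n) e e' = k - 1 ∧ d = ((c e : ℤ) - c e').natAbs} with hSk'
  have hbdd : BddAbove Sk' := by
    refine ⟨t, ?_⟩
    rintro d ⟨e, he, e', he', -, rfl⟩
    have h1 := hc.1 e he
    have h2 := hc.1 e' he'
    rw [Finset.mem_Icc] at h1 h2
    omega
  rcases Set.eq_empty_or_nonempty Sk with hemp | hne
  · rw [hemp, csSup_empty]
    simp only [Nat.bot_eq_zero]
    omega
  refine csSup_le hne ?_
  rintro d ⟨e, he, e', he', hdist, rfl⟩
  obtain ⟨f, hf, hfd, hfc⟩ := key hc hk1 hk2 he he' hdist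
  have hmem : ((c e : ℤ) - c f).natAbs ∈ Sk' := ⟨e, he, f, hf, hfd, rfl⟩
  have hle := le_csSup hbdd hmem
  omega
end

section
/- The n-dimensional hypercube Q_n has an interval t-coloring if and only if n ≤ t ≤ n(n+1)/2. -/
open SimpleGraph

variable {n : ℕ}

def bflip (i : Fin n) (u : Fin n → Bool) : Fin n → Bool := Function.update u i (!u i)

lemma flip_self (i : Fin n) (u : Fin n → Bool) : bflip i u i = !u i := by
  simp [bflip]

lemma flip_ne (i j : Fin n) (u : Fin n → Bool) (h : j ≠ i) : bflip i u j = u j := by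
  simp [bflip, Function.update_of_ne h]

lemma bflip_flip (i : Fin n) (u : Fin n → Bool) : bflip i (bflip i u) = u := by
  funext j
  by_cases h : j = i
  · subst h; simp [bflip]
  · simp [flip_ne _ _ _ h]

lemma adj_flip (i : Fin n) (u : Fin n → Bool) : (hypercube n).Adj u (bflip i u) := by
  refine ⟨i, by simp [flip_self], fun j hj => ?_⟩
  by_cases h : j = i
  · exact h
  · exact absurd (flip_ne i j u h).symm hj

lemma adj_iff_flip {u v : Fin n → Bool} :
    (hypercube n).Adj u v ↔ ∃ i, v = bflip i u := by
  constructor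
  · rintro ⟨i, hi, hu⟩
    refine ⟨i, funext fun j => ?_⟩
    by_cases h : j = i
    · subst h
      cases hju : u j <;> cases hjv : v j <;> simp_all [flip_self]
    · rw [flip_ne i j u h]
      by_contra hne
      exact h (hu j (Ne.symm hne))
  · rintro ⟨i, rfl⟩; exact adj_flip i u

lemma flip_inj {i j : Fin n} {u : Fin n → Bool} (h : bflip i u = bflip j u) : i = j := by
  by_contra hne
  have h1 := congrFun h i
  rw [flip_self, flip_ne j i u hne] at h1
  exact absurd h1 (by cases u i <;> simp)

/-- Edges incident to `v` are exactly the flips. -/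
lemma incident_iff {v : Fin n → Bool} {e : Sym2 (Fin n → Bool)} :
    e ∈ (hypercube n).edgeSet ∧ v ∈ e ↔ ∃ i, e = s(v, bflip i v) := by
  constructor
  · rintro ⟨he, hv⟩
    induction e with
    | _ a b =>
      rw [Sym2.mem_iff] at hv
      rw [SimpleGraph.mem_edgeSet] at he
      rcases hv with rfl | rfl
      · obtain ⟨i, rfl⟩ := adj_iff_flip.mp he
        exact ⟨i, rfl⟩
      · obtain ⟨i, rfl⟩ := adj_iff_flip.mp he.symm
        exact ⟨i, Sym2.eq_swap⟩
  · rintro ⟨i, rfl⟩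
    exact ⟨(adj_flip i v), Sym2.mem_mk_left _ _⟩

lemma edge_flip_inj {v : Fin n → Bool} {i j : Fin n}
    (h : s(v, bflip i v) = s(v, bflip j v)) : i = j := by
  rw [Sym2.eq_iff] at h
  rcases h with ⟨-, h⟩ | ⟨h, -⟩
  · exact flip_inj h
  · have := congrFun h j
    rw [flip_self] at this
    exact absurd this (by cases v j <;> simp)

section EdgeForm

variable {t : ℕ} {c : Sym2 (Fin n → Bool) → ℕ}

lemma edge_form {e : Sym2 (Fin n → Bool)} (he : e ∈ (hypercube n).edgeSet) :
    ∃ u i, e = s(u, bflip i u) := by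
  induction e with
  | _ a b =>
    rw [SimpleGraph.mem_edgeSet] at he
    obtain ⟨i, rfl⟩ := adj_iff_flip.mp he
    exact ⟨a, i, rfl⟩

end EdgeForm

namespace IntervalHC

/-- indicator -/
def ind (e x : ℕ → Bool) (c : ℕ) : ℕ := if e c ∧ x c then 1 else 0

/-- tail count -/
def tc (e x : ℕ → Bool) (m n : ℕ) : ℕ := ∑ c ∈ Finset.Ico m n, ind e x c

def bval (e x : ℕ → Bool) (n i : ℕ) : ℕ :=
  if e i ∧ x i then tc e x (i+1) n else i + tc e x (i+1) n

def colStart (e x : ℕ → Bool) (n : ℕ) : ℕ :=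
  1 + ∑ c ∈ Finset.range n, (if e c ∧ x c then c else 0)

def col (e x : ℕ → Bool) (n i : ℕ) : ℕ := colStart e x n + bval e x n i

lemma tc_succ (e x : ℕ → Bool) {m n : ℕ} (h : m < n) :
    tc e x m n = ind e x m + tc e x (m+1) n := by
  rw [tc, tc, ← Finset.sum_eq_sum_Ico_succ_bot h]

lemma tc_le (e x : ℕ → Bool) (m n : ℕ) : tc e x m n ≤ n - m := by
  calc tc e x m n ≤ ∑ c ∈ Finset.Ico m n, 1 :=
        Finset.sum_le_sum (fun c _ => by unfold ind; split <;> simp)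
    _ = n - m := by simp

/-- Key spectrum lemma. -/
lemma image_bval (e x : ℕ → Bool) (n : ℕ) :
    ∀ m, m ≤ n → (Finset.range m).image (bval e x n) =
      Finset.Ico (tc e x m n) (tc e x m n + m) := by
  intro m
  induction m with
  | zero => simp
  | succ m ih =>
    intro hm
    have ihm := ih (Nat.le_of_succ_le hm)
    rw [Finset.range_add_one, Finset.image_insert, ihm]
    have hs : tc e x m n = ind e x m + tc e x (m+1) n := tc_succ e x hm
    by_cases h : e m ∧ x m
    · have hb : bval e x n m = tc e x (m+1) n := if_pos h
      have hi : ind e x m = 1 := if_pos h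
      ext k
      simp only [Finset.mem_insert, Finset.mem_Ico, hb, hs, hi]
      omega
    · have hb : bval e x n m = m + tc e x (m+1) n := if_neg h
      have hi : ind e x m = 0 := if_neg h
      ext k
      simp only [Finset.mem_insert, Finset.mem_Ico, hb, hs, hi]
      omega

lemma image_col (e x : ℕ → Bool) (n : ℕ) :
    (Finset.range n).image (col e x n) =
      Finset.Ico (colStart e x n) (colStart e x n + n) := by
  have h := image_bval e x n n le_rfl
  have : tc e x n n = 0 := by simp [tc]
  rw [this] at h
  ext k
  simp only [Finset.mem_image, Finset.mem_Ico, col] at *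
  constructor
  · rintro ⟨i, hi, rfl⟩
    have : bval e x n i ∈ Finset.Ico 0 (0 + n) := by
      rw [← h]; exact Finset.mem_image_of_mem _ hi
    simp only [Finset.mem_Ico] at this
    omega
  · rintro ⟨h1, h2⟩
    have : k - colStart e x n ∈ Finset.Ico 0 (0 + n) := by
      simp only [Finset.mem_Ico]; omega
    rw [← h] at this
    obtain ⟨i, hi, hb⟩ := Finset.mem_image.mp this
    exact ⟨i, hi, by omega⟩

/-- `col` doesn't depend on coordinate `i`. -/
lemma col_congr (e x x' : ℕ → Bool) (n i : ℕ) (hi : i < n)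
    (hagree : ∀ c, c ≠ i → x c = x' c) :
    col e x n i = col e x' n i := by
  have htc : tc e x (i+1) n = tc e x' (i+1) n := by
    unfold tc; apply Finset.sum_congr rfl
    intro c hc
    simp only [Finset.mem_Ico] at hc
    unfold ind; rw [hagree c (by omega)]
  have hsum : ∑ c ∈ Finset.range n, (if e c ∧ x c then c else 0) + bval e x n i
      = ∑ c ∈ Finset.range n, (if e c ∧ x' c then c else 0) + bval e x' n i := by
    rw [← Finset.sum_erase_add _ _ (Finset.mem_range.mpr hi),
        ← Finset.sum_erase_add _ _ (Finset.mem_range.mpr hi)]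
    have herase : ∑ c ∈ (Finset.range n).erase i, (if e c ∧ x c then c else 0)
        = ∑ c ∈ (Finset.range n).erase i, (if e c ∧ x' c then c else 0) := by
      apply Finset.sum_congr rfl
      intro c hc
      rw [hagree c (Finset.ne_of_mem_erase hc)]
    rw [herase]
    unfold bval
    rw [htc]
    by_cases h : x i
    · by_cases h' : x' i
      · simp [h, h']
      · by_cases he : e i <;> simp [h, h', he] <;> omega
    · by_cases h' : x' i
      · by_cases he : e i <;> simp [h, h', he] <;> omega
      · simp [h, h']
  unfold col colStart
  omega

lemma colStart_le (e x : ℕ → Bool) (n : ℕ) :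
    colStart e x n ≤ 1 + ∑ c ∈ Finset.range n, (if e c then c else 0) := by
  unfold colStart
  have : ∀ c ∈ Finset.range n, (if e c ∧ x c then c else 0) ≤ (if e c then c else 0) := by
    intro c _
    by_cases he : e c <;> by_cases hx : x c <;> simp [he, hx]
  exact Nat.add_le_add_left (Finset.sum_le_sum this) 1

lemma one_le_colStart (e x : ℕ → Bool) (n : ℕ) : 1 ≤ colStart e x n := Nat.le_add_right 1 _


lemma exists_window (g : ℕ → ℕ) (n k : ℕ) (h1 : g n ≤ k) (h2 : k < g 0 + n)
    (hstep : ∀ j, j < n → g j < g (j+1) + n) :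
    ∃ j, j ≤ n ∧ g j ≤ k ∧ k < g j + n := by
  classical
  have hex : ∃ j, j ≤ n ∧ g j ≤ k := ⟨n, le_rfl, h1⟩
  obtain ⟨hj₀n, hj₀⟩ := Nat.find_spec hex
  refine ⟨Nat.find hex, hj₀n, hj₀, ?_⟩
  rcases Nat.eq_zero_or_eq_succ_pred (Nat.find hex) with h0 | hsucc
  · rw [h0]; exact h2
  · set m := Nat.find hex - 1 with hm
    have hlt : m < Nat.find hex := by omega
    have hmin := Nat.find_min hex hlt
    have hmn : m ≤ n := by omega
    have hgm : k < g m := by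
      by_contra hle
      exact hmin ⟨hmn, by omega⟩
    have hmn' : m < n := by
      rcases Nat.lt_or_ge m n with h | h
      · exact h
      · have : m = n := le_antisymm hmn h
        rw [this] at hgm; omega
    have := hstep m hmn'
    rw [hsucc]
    have : m + 1 = Nat.find hex := by omega
    rw [← hsucc, ← this] at *
    omega

/-- subset sums of `{0,…,n-1}` hit everything up to `n(n-1)/2`. -/
lemma subset_sum (n s : ℕ) (hs : s ≤ ∑ c ∈ Finset.range n, c) :
    ∃ e : ℕ → Bool, (∀ c, n ≤ c → e c = false) ∧
      ∑ c ∈ Finset.range n, (if e c then c else 0) = s := by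
  induction n generalizing s with
  | zero => exact ⟨fun _ => false, fun c _ => rfl, by simp at hs ⊢; omega⟩
  | succ n ih =>
    rw [Finset.sum_range_succ] at hs
    by_cases h : s ≤ ∑ c ∈ Finset.range n, c
    · obtain ⟨e, he, hsum⟩ := ih s h
      refine ⟨e, fun c hc => he c (by omega), ?_⟩
      rw [Finset.sum_range_succ, hsum, he n le_rfl]
      simp
    · have hn1 : 1 ≤ n := by
        rcases Nat.eq_zero_or_pos n with rfl | h'
        · simp at hs h; omega
        · exact h'
      have hge : n ≤ s := by
        have h1 : n - 1 < n := by omega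
        have : n - 1 ≤ ∑ c ∈ Finset.range n, c :=
          Finset.single_le_sum (f := fun c => c) (fun c _ => Nat.zero_le c)
            (Finset.mem_range.mpr h1)
        omega
      obtain ⟨e, he, hsum⟩ := ih (s - n) (by omega)
      refine ⟨fun c => e c || decide (c = n), fun c hc => ?_, ?_⟩
      · simp [he c (by omega)]; omega
      · rw [Finset.sum_range_succ]
        have hcong : ∀ c ∈ Finset.range n,
            (if (e c || decide (c = n)) then c else 0) = (if e c then c else 0) := by
          intro c hc
          simp only [Finset.mem_range] at hc
          have : decide (c = n) = false := by simp; omega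
          rw [this, Bool.or_false]
        rw [Finset.sum_congr rfl hcong, hsum]
        simp only [decide_eq_true_eq, Bool.or_true, if_pos, decide_true, if_true]
        omega


lemma colStart_eqOn (e x x' : ℕ → Bool) (n : ℕ) (hxx : ∀ c, c < n → x c = x' c) :
    colStart e x n = colStart e x' n := by
  unfold colStart
  congr 1
  apply Finset.sum_congr rfl
  intro c hc
  rw [hxx c (Finset.mem_range.mp hc)]

lemma col_eqOn (e x x' : ℕ → Bool) (n : ℕ) (hxx : ∀ c, c < n → x c = x' c)
    (i : ℕ) (hi : i < n) : col e x n i = col e x' n i := by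
  have htc : tc e x (i+1) n = tc e x' (i+1) n := by
    unfold tc ind
    apply Finset.sum_congr rfl
    intro c hc
    simp only [Finset.mem_Ico] at hc
    rw [hxx c hc.2]
  unfold col bval
  rw [colStart_eqOn e x x' n hxx, hxx i hi, htc]


end IntervalHC

open IntervalHC

def extv (u : Fin n → Bool) : ℕ → Bool := fun c => if h : c < n then u ⟨c, h⟩ else false

def Fc (e : ℕ → Bool) (u v : Fin n → Bool) : ℕ :=
  if h : (Finset.univ.filter (fun i => u i ≠ v i)).Nonempty then
    col e (fun c => if hc : c < n then (u ⟨c, hc⟩ && v ⟨c, hc⟩) else false) n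
      ((Finset.univ.filter (fun i => u i ≠ v i)).min' h).val
  else 0

lemma Fc_symm (e : ℕ → Bool) (u v : Fin n → Bool) : Fc e u v = Fc e v u := by
  unfold Fc
  have hset : (Finset.univ.filter (fun i => u i ≠ v i))
      = (Finset.univ.filter (fun i => v i ≠ u i)) := by
    ext i; simp [ne_comm]
  have hx : (fun c => if hc : c < n then (u ⟨c, hc⟩ && v ⟨c, hc⟩) else false)
      = (fun c => if hc : c < n then (v ⟨c, hc⟩ && u ⟨c, hc⟩) else false) := by
    funext c
    split
    · exact Bool.and_comm ..
    · rfl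
  rw [hset, hx]

def ccol (e : ℕ → Bool) : Sym2 (Fin n → Bool) → ℕ := Sym2.lift ⟨Fc e, Fc_symm e⟩

lemma ccol_edge (e : ℕ → Bool) (u : Fin n → Bool) (i : Fin n) :
    ccol e s(u, bflip i u) = col e (extv u) n i.val := by
  unfold ccol
  rw [Sym2.lift_mk]
  simp only
  unfold Fc
  have hset : (Finset.univ.filter (fun j => u j ≠ bflip i u j)) = {i} := by
    ext j
    simp only [Finset.mem_filter, Finset.mem_univ, true_and, Finset.mem_singleton]
    constructor
    · intro hj
      by_contra hne
      exact hj (flip_ne i j u hne).symm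
    · rintro rfl
      rw [flip_self]
      cases u j <;> simp
  rw [dif_pos (by rw [hset]; exact ⟨i, Finset.mem_singleton_self i⟩)]
  have hmin : ((Finset.univ.filter (fun j => u j ≠ bflip i u j)).min'
      (by rw [hset]; exact ⟨i, Finset.mem_singleton_self i⟩)) = i := by
    simp only [hset]
    exact Finset.min'_singleton i
  rw [hmin]
  apply col_congr
  · exact i.isLt
  · intro c hc
    unfold extv
    by_cases h : c < n
    · rw [dif_pos h, dif_pos h]
      have : (⟨c, h⟩ : Fin n) ≠ i := by
        intro heq
        exact hc (by rw [← heq])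
      rw [flip_ne i ⟨c, h⟩ u this]
      cases u ⟨c, h⟩ <;> simp
    · rw [dif_neg h, dif_neg h]

theorem sufficiency (hn : 1 ≤ n) (e : ℕ → Bool) :
    HasIntervalColoring (hypercube n)
      (n + ∑ c ∈ Finset.range n, (if e c then c else 0)) := by
  set t := n + ∑ c ∈ Finset.range n, (if e c then c else 0) with hts
  refine ⟨ccol e, ?_, ?_, ?_, ?_⟩
  · -- colors in range
    intro ed hed
    obtain ⟨u, i, rfl⟩ := edge_form hed
    rw [ccol_edge]
    have hmem : col e (extv u) n i.val ∈
        Finset.Ico (colStart e (extv u) n) (colStart e (extv u) n + n) := by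
      rw [← image_col]
      exact Finset.mem_image_of_mem _ (Finset.mem_range.mpr i.isLt)
    rw [Finset.mem_Ico] at hmem
    have h1 := one_le_colStart e (extv u) n
    have h2 := colStart_le e (extv u) n
    rw [Finset.mem_Icc]
    omega
  · -- proper
    intro e₁ he₁ e₂ he₂ hne ⟨v, hv1, hv2⟩
    obtain ⟨i, rfl⟩ := incident_iff.mp ⟨he₁, hv1⟩
    obtain ⟨j, rfl⟩ := incident_iff.mp ⟨he₂, hv2⟩
    have hij : i ≠ j := fun h => hne (by rw [h])
    rw [ccol_edge, ccol_edge]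
    have hinj : Set.InjOn (col e (extv v) n) (Finset.range n) := by
      apply Finset.injOn_of_card_image_eq
      rw [image_col, Nat.card_Ico, Finset.card_range]
      omega
    intro heq
    exact hij (Fin.val_injective (hinj (by simpa using i.isLt) (by simpa using j.isLt) heq))
  · -- all colors used
    intro k hk
    rw [Finset.mem_Icc] at hk
    set y : ℕ → ℕ → Bool := fun j c => e c && decide (j ≤ c) with hy
    set g : ℕ → ℕ := fun j => colStart e (y j) n with hg
    have hgn : g n = 1 := by
      rw [hg]
      simp only
      unfold colStart
      rw [Finset.sum_eq_zero, Nat.add_zero]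
      intro c hc
      simp only [Finset.mem_range] at hc
      have : (y n c) = false := by
        rw [hy]
        simp only [Bool.and_eq_false_iff, decide_eq_false_iff_not]
        right; omega
      simp [this]
    have hg0 : g 0 = t + 1 - n := by
      rw [hg]
      simp only
      unfold colStart
      have : ∀ c ∈ Finset.range n, (if e c ∧ y 0 c then c else 0) = (if e c then c else 0) := by
        intro c _
        have : y 0 c = e c := by rw [hy]; simp
        rw [this]
        by_cases h : e c <;> simp [h]
      rw [Finset.sum_congr rfl this, hts]
      omega
    have hstep : ∀ j, j < n → g j < g (j+1) + n := by
      intro j hj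
      have hgj : g j = g (j+1) + (if e j then j else 0) := by
        rw [hg]
        simp only
        unfold colStart
        rw [← Finset.sum_erase_add _ _ (Finset.mem_range.mpr hj),
            ← Finset.sum_erase_add _ _ (Finset.mem_range.mpr hj)]
        have hcong : ∀ c ∈ (Finset.range n).erase j,
            (if e c ∧ y j c then c else 0) = (if e c ∧ y (j+1) c then c else 0) := by
          intro c hc
          have hcj : c ≠ j := Finset.ne_of_mem_erase hc
          have : y j c = y (j+1) c := by
            rw [hy]
            simp only
            congr 1
            simp only [decide_eq_decide]
            omega
          rw [this]
        rw [Finset.sum_congr rfl hcong]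
        have h1 : y j j = e j := by rw [hy]; simp
        have h2 : y (j+1) j = false := by rw [hy]; simp
        rw [h1, h2]
        by_cases h : e j <;> simp [h] <;> omega
      have : (if e j then j else 0) < n := by
        by_cases h : e j <;> simp [h] <;> omega
      omega
    obtain ⟨j, hjn, hj1, hj2⟩ := exists_window g n k (by omega) (by omega) hstep
    -- the vertex
    set u : Fin n → Bool := fun i => y j i.val with hu
    have hext : ∀ c, c < n → extv u c = y j c := by
      intro c hc
      rw [extv]
      simp only [dif_pos hc, hu]
    have hstt : colStart e (extv u) n = g j :=
      colStart_eqOn e (extv u) (y j) n hext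
    have hkmem : k ∈ Finset.Ico (colStart e (extv u) n) (colStart e (extv u) n + n) := by
      rw [Finset.mem_Ico, hstt]
      exact ⟨hj1, hj2⟩
    rw [← image_col] at hkmem
    obtain ⟨m, hm, hcolm⟩ := Finset.mem_image.mp hkmem
    rw [Finset.mem_range] at hm
    refine ⟨s(u, bflip ⟨m, hm⟩ u), adj_flip _ u, ?_⟩
    rw [ccol_edge]
    exact hcolm
  · -- interval property
    intro v k₁ k₂ k h1 h2 hk1 hk2
    obtain ⟨e₁, he₁, hv₁, hc₁⟩ := h1
    obtain ⟨e₂, he₂, hv₂, hc₂⟩ := h2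
    obtain ⟨i, rfl⟩ := incident_iff.mp ⟨he₁, hv₁⟩
    obtain ⟨j, rfl⟩ := incident_iff.mp ⟨he₂, hv₂⟩
    rw [ccol_edge] at hc₁ hc₂
    have hm1 : k₁ ∈ Finset.Ico (colStart e (extv v) n) (colStart e (extv v) n + n) := by
      rw [← image_col, ← hc₁]
      exact Finset.mem_image_of_mem _ (Finset.mem_range.mpr i.isLt)
    have hm2 : k₂ ∈ Finset.Ico (colStart e (extv v) n) (colStart e (extv v) n + n) := by
      rw [← image_col, ← hc₂]
      exact Finset.mem_image_of_mem _ (Finset.mem_range.mpr j.isLt)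
    rw [Finset.mem_Ico] at hm1 hm2
    have hkmem : k ∈ Finset.Ico (colStart e (extv v) n) (colStart e (extv v) n + n) := by
      rw [Finset.mem_Ico]; omega
    rw [← image_col] at hkmem
    obtain ⟨m, hm, hcolm⟩ := Finset.mem_image.mp hkmem
    rw [Finset.mem_range] at hm
    exact ⟨s(v, bflip ⟨m, hm⟩ v), adj_flip _ v, Sym2.mem_mk_left _ _, by rw [ccol_edge]; exact hcolm⟩


section Necessity

variable {t : ℕ} {c : Sym2 (Fin n → Bool) → ℕ} (hc : IsIntervalColoring (hypercube n) t c)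

/-- colors incident to a vertex -/
noncomputable def spec (c : Sym2 (Fin n → Bool) → ℕ) (v : Fin n → Bool) : Finset ℕ :=
  Finset.image (fun i => c s(v, bflip i v)) Finset.univ

lemma mem_spec_iff {v : Fin n → Bool} {k : ℕ} :
    k ∈ spec c v ↔ ∃ e ∈ (hypercube n).edgeSet, v ∈ e ∧ c e = k := by
  unfold spec
  simp only [Finset.mem_image, Finset.mem_univ, true_and]
  constructor
  · rintro ⟨i, rfl⟩
    exact ⟨s(v, bflip i v), (adj_flip i v), Sym2.mem_mk_left _ _, rfl⟩
  · rintro ⟨e, he, hv, rfl⟩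
    obtain ⟨i, rfl⟩ := incident_iff.mp ⟨he, hv⟩
    exact ⟨i, rfl⟩

include hc

lemma phi_injective (v : Fin n → Bool) :
    Function.Injective (fun i : Fin n => c s(v, bflip i v)) := by
  intro i j hij
  by_contra hne
  have hne' : s(v, bflip i v) ≠ s(v, bflip j v) := fun h => hne (edge_flip_inj h)
  exact hc.2.1 _ (adj_flip i v) _ (adj_flip j v) hne'
    ⟨v, Sym2.mem_mk_left _ _, Sym2.mem_mk_left _ _⟩ hij

lemma card_spec (v : Fin n → Bool) : (spec c v).card = n := by
  unfold spec
  rw [Finset.card_image_of_injective _ (phi_injective hc v)]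
  simp

lemma spec_nonempty (v : Fin n → Bool) (hn : 1 ≤ n) : (spec c v).Nonempty := by
  rw [← Finset.card_pos, card_spec hc]; omega

/-- the spectrum is an interval -/
lemma spec_eq_Icc (v : Fin n → Bool) (hn : 1 ≤ n) :
    spec c v = Finset.Icc ((spec c v).min' (spec_nonempty hc v hn))
      ((spec c v).min' (spec_nonempty hc v hn) + n - 1) := by
  set S := spec c v with hS
  have hne : S.Nonempty := spec_nonempty hc v hn
  have hsub : S ⊆ Finset.Icc (S.min' hne) (S.max' hne) :=
    fun k hk => Finset.mem_Icc.mpr ⟨S.min'_le k hk, S.le_max' k hk⟩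
  have hsup : Finset.Icc (S.min' hne) (S.max' hne) ⊆ S := by
    intro k hk
    rw [Finset.mem_Icc] at hk
    have h1 := mem_spec_iff.mp (S.min'_mem hne)
    have h2 := mem_spec_iff.mp (S.max'_mem hne)
    exact mem_spec_iff.mpr (hc.2.2.2 v _ _ k h1 h2 hk.1 hk.2)
  have heq : S = Finset.Icc (S.min' hne) (S.max' hne) := le_antisymm hsub hsup
  have hcard : (S.min' hne) + (S.card - 1) = S.max' hne := by
    have h := congrArg Finset.card heq
    rw [Nat.card_Icc] at h
    have hmm : S.min' hne ≤ S.max' hne := S.min'_le _ (S.max'_mem hne)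
    omega
  rw [card_spec hc] at hcard
  have hmax : S.min' hne + n - 1 = S.max' hne := by omega
  rw [← hmax] at heq
  exact heq

lemma spec_le (v : Fin n → Bool) (hn : 1 ≤ n) {k : ℕ} (hk : k ∈ spec c v) :
    k ≤ (spec c v).min' (spec_nonempty hc v hn) + n - 1 := by
  rw [spec_eq_Icc hc v hn] at hk
  exact (Finset.mem_Icc.mp hk).2

/-- Hamming distance to `v₀` -/
def hdist (v u : Fin n → Bool) : ℕ := (Finset.univ.filter (fun i => v i ≠ u i)).card

lemma lower_bound (hn : 1 ≤ n) : n ≤ t := by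
  have h1 : spec c ((fun _ => false) : Fin n → Bool) ⊆ Finset.Icc 1 t := by
    intro k hk
    obtain ⟨e, he, -, rfl⟩ := mem_spec_iff.mp hk
    exact hc.1 e he
  calc n = (spec c (fun _ => false)).card := (card_spec hc _).symm
    _ ≤ (Finset.Icc 1 t).card := Finset.card_le_card h1
    _ = t := by rw [Nat.card_Icc]; omega

end Necessity

section Necessity2

variable {t : ℕ} {c : Sym2 (Fin n → Bool) → ℕ} (hc : IsIntervalColoring (hypercube n) t c)

include hc

lemma spec_ge (v : Fin n → Bool) {k : ℕ} (hk : k ∈ spec c v) : 1 ≤ k := by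
  obtain ⟨e, he, -, rfl⟩ := mem_spec_iff.mp hk
  exact (Finset.mem_Icc.mp (hc.1 e he)).1

lemma key_induction (hn : 1 ≤ n) (v₀ : Fin n → Bool)
    (hv₀ : (spec c v₀).min' (spec_nonempty hc v₀ hn) = 1) :
    ∀ d (u : Fin n → Bool), hdist v₀ u = d →
      (spec c u).min' (spec_nonempty hc u hn) ≤ 1 + ∑ i ∈ Finset.range d, (n - 1 - i) := by
  intro d
  induction d with
  | zero =>
    intro u hu
    have : v₀ = u := by
      funext i
      have := Finset.card_eq_zero.mp hu
      by_contra hne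
      have : i ∈ Finset.univ.filter (fun i => v₀ i ≠ u i) := by
        simp only [Finset.mem_filter, Finset.mem_univ, true_and]; exact hne
      rw [Finset.card_eq_zero.mp hu] at this
      exact absurd this (Finset.notMem_empty i)
    rw [← this, hv₀]
    simp
  | succ d ih =>
    intro u hu
    set D := Finset.univ.filter (fun i => v₀ i ≠ u i) with hD
    have hDcard : D.card = d + 1 := hu
    set au := (spec c u).min' (spec_nonempty hc u hn) with hau
    set A := 1 + ∑ i ∈ Finset.range d, (n - 1 - i) with hA
    -- colors of back edges
    set T := D.image (fun i => c s(u, bflip i u)) with hT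
    have hTcard : T.card = d + 1 := by
      rw [hT, Finset.card_image_of_injective _ (phi_injective hc u), hDcard]
    have hTsub : T ⊆ Finset.Icc au (A + n - 1) := by
      intro k hk
      obtain ⟨i, hiD, rfl⟩ := Finset.mem_image.mp hk
      have hkspec : c s(u, bflip i u) ∈ spec c u := by
        rw [mem_spec_iff]
        exact ⟨_, (adj_flip i u), Sym2.mem_mk_left _ _, rfl⟩
      refine Finset.mem_Icc.mpr ⟨(spec c u).min'_le _ hkspec, ?_⟩
      -- the neighbor w is closer to v₀
      set w := bflip i u with hw
      have hedge : s(u, bflip i u) = s(w, bflip i w) := by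
        rw [hw, bflip_flip]
        exact Sym2.eq_swap
      have hwd : hdist v₀ w = d := by
        have hfilter : Finset.univ.filter (fun j => v₀ j ≠ w j) = D.erase i := by
          ext j
          simp only [Finset.mem_filter, Finset.mem_univ, true_and, Finset.mem_erase, hD]
          constructor
          · intro hj
            have hji : j ≠ i := by
              rintro rfl
              rw [hw, flip_self] at hj
              have : v₀ j ≠ u j := by
                have hiD' := hiD
                rw [hD] at hiD'
                simp only [Finset.mem_filter, Finset.mem_univ, true_and] at hiD'
                exact hiD'
              cases h1 : u j <;> cases h2 : v₀ j <;> simp_all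
            rw [hw, flip_ne i j u hji] at hj
            exact ⟨hji, hj⟩
          · rintro ⟨hji, hj⟩
            rw [hw, flip_ne i j u hji]
            exact hj
        rw [hdist, hfilter, Finset.card_erase_of_mem hiD, hDcard]
        omega
      have hihw := ih w hwd
      have hkw : c s(u, bflip i u) ∈ spec c w := by
        rw [mem_spec_iff, hedge]
        exact ⟨_, (adj_flip i w), Sym2.mem_mk_left _ _, rfl⟩
      have h1 := spec_le hc w hn hkw
      rw [← hw] at h1
      omega
    have hdn : d + 1 ≤ n := by
      rw [← hDcard]
      calc D.card ≤ (Finset.univ : Finset (Fin n)).card := Finset.card_le_card (Finset.subset_univ D)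
        _ = n := by simp
    have hcard_le := Finset.card_le_card hTsub
    rw [hTcard, Nat.card_Icc] at hcard_le
    have hA1 : 1 ≤ A := by rw [hA]; omega
    rw [Finset.sum_range_succ]
    omega

lemma upper_bound (hn : 1 ≤ n) : t ≤ n * (n + 1) / 2 := by
  have hnt : n ≤ t := lower_bound hc hn
  -- a vertex where color 1 appears
  obtain ⟨e1, he1, hce1⟩ := hc.2.2.1 1 (Finset.mem_Icc.mpr ⟨le_rfl, by omega⟩)
  obtain ⟨v₀, i₀, rfl⟩ := edge_form he1
  have h1spec : (1 : ℕ) ∈ spec c v₀ := by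
    rw [mem_spec_iff]
    exact ⟨_, he1, Sym2.mem_mk_left _ _, hce1⟩
  have hv₀ : (spec c v₀).min' (spec_nonempty hc v₀ hn) = 1 := by
    have h1 := (spec c v₀).min'_le _ h1spec
    have h2 := spec_ge hc v₀ ((spec c v₀).min'_mem (spec_nonempty hc v₀ hn))
    omega
  -- a vertex where color t appears
  obtain ⟨et, het, hcet⟩ := hc.2.2.1 t (Finset.mem_Icc.mpr ⟨by omega, le_rfl⟩)
  obtain ⟨u, iu, rfl⟩ := edge_form het
  have htspec : t ∈ spec c u := by
    rw [mem_spec_iff]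
    exact ⟨_, het, Sym2.mem_mk_left _ _, hcet⟩
  have htle := spec_le hc u hn htspec
  set d := hdist v₀ u with hd
  have hkey := key_induction hc hn v₀ hv₀ d u rfl
  have hdn : d ≤ n := by
    rw [hd, hdist]
    calc _ ≤ (Finset.univ : Finset (Fin n)).card := Finset.card_le_card (Finset.subset_univ _)
      _ = n := by simp
  have hmono : ∑ i ∈ Finset.range d, (n - 1 - i) ≤ ∑ i ∈ Finset.range n, (n - 1 - i) :=
    Finset.sum_le_sum_of_subset (Finset.range_subset_range.mpr hdn)
  have hrefl : ∑ i ∈ Finset.range n, (n - 1 - i) = ∑ i ∈ Finset.range n, i := by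
    exact Finset.sum_range_reflect (fun j => j) n
  have hgauss := Finset.sum_range_id_mul_two n
  have hnn : n * (n + 1) = n * (n - 1) + 2 * n := by
    obtain ⟨m, rfl⟩ := Nat.exists_eq_add_of_le hn
    ring_nf
    simp [Nat.add_sub_cancel]
    ring
  omega

end Necessity2

theorem stmt4 (n : ℕ) (hn : 1 ≤ n) (t : ℕ) :
    HasIntervalColoring (hypercube n) t ↔ n ≤ t ∧ t ≤ n * (n + 1) / 2 := by
  constructor
  · rintro ⟨c, hc⟩
    exact ⟨lower_bound hc hn, upper_bound hc hn⟩
  · rintro ⟨h1, h2⟩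
    have hgauss := Finset.sum_range_id_mul_two n
    have hnn : n * (n + 1) = n * (n - 1) + 2 * n := by
      obtain ⟨m, rfl⟩ := Nat.exists_eq_add_of_le hn
      ring_nf
      simp [Nat.add_sub_cancel]
      ring
    obtain ⟨e, he, hsum⟩ := IntervalHC.subset_sum n (t - n) (by omega)
    have h := sufficiency hn e
    rw [hsum] at h
    rwa [show n + (t - n) = t by omega] at h
end

section
/- For every even m ≥ 4 and every n ≥ 1, the cylinder C(m, 2n+1) = P_m □ C_{2n+1} admits an interval 4-coloring, and w(C(m, 2n+1)) = 4. -/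
open SimpleGraph

namespace CylAux

/-- Color of a horizontal (cycle) edge between columns `j` and `j'`. -/
def Hcol (k j j' : ℕ) : ℕ :=
  if min j j' = 0 ∧ max j j' = k - 1 then 1
  else if min j j' % 2 = 0 then 2 else 3

/-- Color of a vertical (path) edge between rows `i`, `i'` at column `j`. -/
def Vcol (k i i' j : ℕ) : ℕ :=
  if min i i' % 2 = 0 then (if j = 0 then 3 else if j = k - 1 then 2 else 1) else 4

def col {m k : ℕ} (p q : Fin m × Fin k) : ℕ :=
  if p.1 = q.1 then Hcol k p.2.val q.2.val
  else if p.2 = q.2 then Vcol k p.1.val q.1.val p.2.val else 0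

lemma Hcol_symm (k j j' : ℕ) : Hcol k j j' = Hcol k j' j := by
  unfold Hcol; rw [min_comm, max_comm]

lemma Vcol_symm (k i i' j : ℕ) : Vcol k i i' j = Vcol k i' i j := by
  unfold Vcol; rw [min_comm]

lemma col_symm {m k : ℕ} (p q : Fin m × Fin k) : col p q = col q p := by
  unfold col
  rcases eq_or_ne p.1 q.1 with h1 | h1
  · rw [if_pos h1, if_pos h1.symm, Hcol_symm]
  · rw [if_neg h1, if_neg h1.symm]
    rcases eq_or_ne p.2 q.2 with h2 | h2
    · rw [if_pos h2, if_pos h2.symm, h2, Vcol_symm]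
    · rw [if_neg h2, if_neg h2.symm]

lemma fin_sub_one {k : ℕ} (hk : 3 ≤ k) (u v : Fin k) :
    (u - v).val = 1 ↔ (u.val = v.val + 1 ∨ (u.val = 0 ∧ v.val = k - 1)) := by
  have hu := u.isLt; have hv := v.isLt
  rw [Fin.sub_def]
  simp only
  rcases le_or_gt v.val u.val with h | h
  · rw [show k - v.val + u.val = (u.val - v.val) + k from by omega, Nat.add_mod_right,
      Nat.mod_eq_of_lt (by omega)]
    omega
  · rw [Nat.mod_eq_of_lt (by omega)]
    omega

lemma adj_iff {m k : ℕ} (hk : 3 ≤ k) (p q : Fin m × Fin k) :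
    (pathGraph m □ cycleGraph k).Adj p q ↔
      ((p.1.val + 1 = q.1.val ∨ q.1.val + 1 = p.1.val) ∧ p.2 = q.2) ∨
      (p.1 = q.1 ∧ (p.2.val = q.2.val + 1 ∨ q.2.val = p.2.val + 1 ∨
        (p.2.val = 0 ∧ q.2.val = k - 1) ∨ (q.2.val = 0 ∧ p.2.val = k - 1))) := by
  rw [boxProd_adj, pathGraph_adj, cycleGraph_adj', fin_sub_one hk, fin_sub_one hk]
  tauto

variable {m k : ℕ}

lemma col_vert (hk : 3 ≤ k) {p q : Fin m × Fin k}
    (h : p.1.val + 1 = q.1.val ∨ q.1.val + 1 = p.1.val) (h2 : p.2 = q.2) :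
    col p q = Vcol k p.1.val q.1.val p.2.val := by
  have hne : p.1 ≠ q.1 := by
    intro he; rw [he] at h; omega
  rw [col, if_neg hne, if_pos h2]

lemma col_horiz {p q : Fin m × Fin k} (h : p.1 = q.1) :
    col p q = Hcol k p.2.val q.2.val := by
  rw [col, if_pos h]

lemma col_vert2 (hk : 3 ≤ k) (a a' : Fin m) (b : Fin k)
    (h : a.val + 1 = a'.val ∨ a'.val + 1 = a.val) :
    col (a, b) (a', b) = Vcol k a.val a'.val b.val :=
  col_vert hk h rfl

lemma col_horiz2 (a : Fin m) (b b' : Fin k) :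
    col (a, b) (a, b') = Hcol k b.val b'.val :=
  col_horiz rfl

lemma col_mem (hk : 3 ≤ k) {p q : Fin m × Fin k}
    (h : (pathGraph m □ cycleGraph k).Adj p q) : col p q ∈ Finset.Icc 1 4 := by
  rw [adj_iff hk] at h
  rcases h with ⟨h1, h2⟩ | ⟨h1, h2⟩
  · rw [col_vert hk h1 h2, Vcol]
    split_ifs <;> simp
  · rw [col_horiz h1, Hcol]
    split_ifs <;> simp

lemma proper (hk : 3 ≤ k) (hko : k % 2 = 1) (v u₁ u₂ : Fin m × Fin k)
    (h1 : (pathGraph m □ cycleGraph k).Adj v u₁)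
    (h2 : (pathGraph m □ cycleGraph k).Adj v u₂)
    (hne : u₁ ≠ u₂) : col v u₁ ≠ col v u₂ := by
  have hb := v.2.isLt
  have hb1 := u₁.2.isLt
  have hb2 := u₂.2.isLt
  rw [adj_iff hk] at h1 h2
  rcases h1 with ⟨r1, e1⟩ | ⟨e1, r1⟩ <;> rcases h2 with ⟨r2, e2⟩ | ⟨e2, r2⟩
  · -- both vertical
    have hvv : u₁.1.val ≠ u₂.1.val := by
      intro he
      exact hne (Prod.ext (Fin.val_injective he) (e1.symm.trans e2))
    rw [col_vert hk r1 e1, col_vert hk r2 e2, Vcol, Vcol]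
    split_ifs <;> omega
  · -- vertical, horizontal
    rw [col_vert hk r1 e1, col_horiz e2, Vcol, Hcol]
    split_ifs <;> omega
  · -- horizontal, vertical
    rw [col_horiz e1, col_vert hk r2 e2, Hcol, Vcol]
    split_ifs <;> omega
  · -- both horizontal
    have hhh : u₁.2.val ≠ u₂.2.val := by
      intro he
      exact hne (Prod.ext (e1.symm.trans e2) (Fin.val_injective he))
    rw [col_horiz e1, col_horiz e2, Hcol, Hcol]
    split_ifs <;> omega

lemma exists_vert (hm : 4 ≤ m) (hme : m % 2 = 0) (a : Fin m) :
    ∃ a' : Fin m, (a.val + 1 = a'.val ∨ a'.val + 1 = a.val) ∧ min a.val a'.val % 2 = 0 := by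
  have ha := a.isLt
  by_cases h : a.val % 2 = 0
  · exact ⟨⟨a.val + 1, by omega⟩, Or.inl rfl, by simp; omega⟩
  · refine ⟨⟨a.val - 1, by omega⟩, Or.inr (by simp; omega), by simp; omega⟩

lemma exists_two_three (hm : 4 ≤ m) (hme : m % 2 = 0) (hk : 3 ≤ k) (hko : k % 2 = 1)
    (v : Fin m × Fin k) (t : ℕ) (ht : t = 2 ∨ t = 3) :
    ∃ u, (pathGraph m □ cycleGraph k).Adj v u ∧ col v u = t := by
  obtain ⟨a, b⟩ := v
  have hb := b.isLt
  rcases ht with rfl | rfl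
  · -- color 2
    by_cases h0 : b.val % 2 = 0
    · by_cases hlast : b.val = k - 1
      · -- vertical, base color at column k-1 is 2
        obtain ⟨a', ha', hmin⟩ := exists_vert hm hme a
        refine ⟨(a', b), ?_, ?_⟩
        · rw [adj_iff hk]; exact Or.inl ⟨ha', rfl⟩
        · rw [col_vert2 hk a a' b ha', Vcol]
          rw [if_pos hmin, if_neg (by omega), if_pos hlast]
      · refine ⟨(a, ⟨b.val + 1, by omega⟩), ?_, ?_⟩
        · rw [adj_iff hk]; exact Or.inr ⟨rfl, Or.inr (Or.inl rfl)⟩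
        · rw [col_horiz2, Hcol]
          simp only
          rw [if_neg (by simp; omega), if_pos (by simp; omega)]
    · refine ⟨(a, ⟨b.val - 1, by omega⟩), ?_, ?_⟩
      · rw [adj_iff hk]; exact Or.inr ⟨rfl, Or.inl (by simp; omega)⟩
      · rw [col_horiz2, Hcol]
        simp only
        rw [if_neg (by simp; omega), if_pos (by simp; omega)]
  · -- color 3
    by_cases h0 : b.val % 2 = 0
    · by_cases hz : b.val = 0
      · -- vertical, base color at column 0 is 3
        obtain ⟨a', ha', hmin⟩ := exists_vert hm hme a
        refine ⟨(a', b), ?_, ?_⟩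
        · rw [adj_iff hk]; exact Or.inl ⟨ha', rfl⟩
        · rw [col_vert2 hk a a' b ha', Vcol]
          rw [if_pos hmin, if_pos hz]
      · refine ⟨(a, ⟨b.val - 1, by omega⟩), ?_, ?_⟩
        · rw [adj_iff hk]; exact Or.inr ⟨rfl, Or.inl (by simp; omega)⟩
        · rw [col_horiz2, Hcol]
          simp only
          rw [if_neg (by simp; omega), if_neg (by simp; omega)]
    · have hlast : b.val ≠ k - 1 := by omega
      refine ⟨(a, ⟨b.val + 1, by omega⟩), ?_, ?_⟩
      · rw [adj_iff hk]; exact Or.inr ⟨rfl, Or.inr (Or.inl rfl)⟩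
      · rw [col_horiz2, Hcol]
        simp only
        rw [if_neg (by simp; omega), if_neg (by simp; omega)]

lemma edge_through {V : Type*} (G : SimpleGraph V) (e : Sym2 V) (v : V)
    (he : e ∈ G.edgeSet) (hv : v ∈ e) : ∃ u, G.Adj v u ∧ e = s(v, u) := by
  induction e using Sym2.ind with
  | _ x y =>
    rw [Sym2.mem_iff] at hv
    rw [SimpleGraph.mem_edgeSet] at he
    rcases hv with rfl | rfl
    · exact ⟨y, he, rfl⟩
    · exact ⟨x, he.symm, Sym2.eq_swap⟩

end CylAux

theorem stmt10 (m n : ℕ) (hm : 4 ≤ m) (hme : Even m) (hn : 1 ≤ n) :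
    HasIntervalColoring (pathGraph m □ cycleGraph (2 * n + 1)) 4 ∧
    wlow (pathGraph m □ cycleGraph (2 * n + 1)) = 4 := by
  have hme' : m % 2 = 0 := Nat.even_iff.mp hme
  set k := 2 * n + 1 with hkdef
  have hk : 3 ≤ k := by omega
  have hko : k % 2 = 1 := by omega
  set G := pathGraph m □ cycleGraph k with hG
  set c : Sym2 (Fin m × Fin k) → ℕ := Sym2.lift ⟨CylAux.col, CylAux.col_symm⟩ with hc
  have hcol : ∀ x y : Fin m × Fin k, c s(x, y) = CylAux.col x y := fun x y => rfl
  -- condition 1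
  have cond1 : ∀ e ∈ G.edgeSet, c e ∈ Finset.Icc 1 4 := by
    intro e he
    induction e using Sym2.ind with
    | _ x y =>
      rw [SimpleGraph.mem_edgeSet] at he
      rw [hcol]
      exact CylAux.col_mem hk he
  -- condition 2
  have cond2 : ∀ e₁ ∈ G.edgeSet, ∀ e₂ ∈ G.edgeSet, e₁ ≠ e₂ →
      (∃ v, v ∈ e₁ ∧ v ∈ e₂) → c e₁ ≠ c e₂ := by
    rintro e₁ h1 e₂ h2 hne ⟨v, hv1, hv2⟩
    obtain ⟨u₁, ha1, rfl⟩ := CylAux.edge_through G e₁ v h1 hv1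
    obtain ⟨u₂, ha2, rfl⟩ := CylAux.edge_through G e₂ v h2 hv2
    have hu : u₁ ≠ u₂ := by rintro rfl; exact hne rfl
    rw [hcol, hcol]
    exact CylAux.proper hk hko v u₁ u₂ ha1 ha2 hu
  -- condition 3
  have cond3 : ∀ t ∈ Finset.Icc 1 4, ∃ e ∈ G.edgeSet, c e = t := by
    intro t ht
    rw [Finset.mem_Icc] at ht
    obtain ⟨ht1, ht2⟩ := ht
    interval_cases t
    · refine ⟨s(((⟨0, by omega⟩ : Fin m), (⟨0, by omega⟩ : Fin k)),
        ((⟨0, by omega⟩ : Fin m), (⟨k - 1, by omega⟩ : Fin k))), ?_, ?_⟩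
      · rw [SimpleGraph.mem_edgeSet, CylAux.adj_iff hk]
        exact Or.inr ⟨rfl, Or.inr (Or.inr (Or.inl (by simp)))⟩
      · rw [hcol, CylAux.col_horiz2, CylAux.Hcol, if_pos (by simp <;> omega)]
    · refine ⟨s(((⟨0, by omega⟩ : Fin m), (⟨0, by omega⟩ : Fin k)),
        ((⟨0, by omega⟩ : Fin m), (⟨1, by omega⟩ : Fin k))), ?_, ?_⟩
      · rw [SimpleGraph.mem_edgeSet, CylAux.adj_iff hk]
        exact Or.inr ⟨rfl, Or.inr (Or.inl (by simp))⟩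
      · rw [hcol, CylAux.col_horiz2, CylAux.Hcol, if_neg (by simp <;> omega),
          if_pos (by simp)]
    · refine ⟨s(((⟨0, by omega⟩ : Fin m), (⟨1, by omega⟩ : Fin k)),
        ((⟨0, by omega⟩ : Fin m), (⟨2, by omega⟩ : Fin k))), ?_, ?_⟩
      · rw [SimpleGraph.mem_edgeSet, CylAux.adj_iff hk]
        exact Or.inr ⟨rfl, Or.inr (Or.inl (by simp))⟩
      · rw [hcol, CylAux.col_horiz2, CylAux.Hcol, if_neg (by simp <;> omega),
          if_neg (by simp)]
    · refine ⟨s(((⟨1, by omega⟩ : Fin m), (⟨0, by omega⟩ : Fin k)),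
        ((⟨2, by omega⟩ : Fin m), (⟨0, by omega⟩ : Fin k))), ?_, ?_⟩
      · rw [SimpleGraph.mem_edgeSet, CylAux.adj_iff hk]
        exact Or.inl ⟨Or.inl (by simp), rfl⟩
      · rw [hcol, CylAux.col_vert2 hk _ _ _ (Or.inl (by simp)), CylAux.Vcol,
          if_neg (by simp)]
  -- condition 4
  have cond4 : ∀ v : Fin m × Fin k, ∀ k₁ k₂ kk : ℕ,
      (∃ e ∈ G.edgeSet, v ∈ e ∧ c e = k₁) → (∃ e ∈ G.edgeSet, v ∈ e ∧ c e = k₂) →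
      k₁ ≤ kk → kk ≤ k₂ → ∃ e ∈ G.edgeSet, v ∈ e ∧ c e = kk := by
    intro v k₁ k₂ kk h1 h2 hle1 hle2
    obtain ⟨e₁, he₁, hv₁, hc₁⟩ := h1
    obtain ⟨e₂, he₂, hv₂, hc₂⟩ := h2
    rcases eq_or_ne kk k₁ with rfl | hne1
    · exact ⟨e₁, he₁, hv₁, hc₁⟩
    rcases eq_or_ne kk k₂ with rfl | hne2
    · exact ⟨e₂, he₂, hv₂, hc₂⟩
    have hb1 : 1 ≤ k₁ := by
      have := cond1 e₁ he₁; rw [hc₁, Finset.mem_Icc] at this; exact this.1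
    have hb2 : k₂ ≤ 4 := by
      have := cond1 e₂ he₂; rw [hc₂, Finset.mem_Icc] at this; exact this.2
    obtain ⟨u, hadj, hcolu⟩ :=
      CylAux.exists_two_three hm hme' hk hko v kk (by omega)
    exact ⟨s(v, u), (G.mem_edgeSet).mpr hadj, Sym2.mem_mk_left v u,
      (hcol v u).trans hcolu⟩
  have h4 : HasIntervalColoring G 4 := ⟨c, cond1, cond2, cond3, cond4⟩
  -- lower bound
  have hlow : ∀ t, HasIntervalColoring G t → 4 ≤ t := by
    rintro t ⟨c', hc1, hc2, -, -⟩
    set v : Fin m × Fin k := (⟨1, by omega⟩, ⟨0, by omega⟩) with hv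
    set u₁ : Fin m × Fin k := (⟨0, by omega⟩, ⟨0, by omega⟩) with hu1
    set u₂ : Fin m × Fin k := (⟨2, by omega⟩, ⟨0, by omega⟩) with hu2
    set u₃ : Fin m × Fin k := (⟨1, by omega⟩, ⟨1, by omega⟩) with hu3
    set u₄ : Fin m × Fin k := (⟨1, by omega⟩, ⟨k - 1, by omega⟩) with hu4
    have a1 : G.Adj v u₁ := by
      rw [CylAux.adj_iff hk]; exact Or.inl ⟨Or.inr (by rfl), rfl⟩
    have a2 : G.Adj v u₂ := by
      rw [CylAux.adj_iff hk]; exact Or.inl ⟨Or.inl (by rfl), rfl⟩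
    have a3 : G.Adj v u₃ := by
      rw [CylAux.adj_iff hk]; exact Or.inr ⟨rfl, Or.inr (Or.inl (by rfl))⟩
    have a4 : G.Adj v u₄ := by
      rw [CylAux.adj_iff hk]; exact Or.inr ⟨rfl, Or.inr (Or.inr (Or.inl ⟨rfl, rfl⟩))⟩
    have hd : ∀ (u u' : Fin m × Fin k), G.Adj v u → G.Adj v u' → u ≠ u' →
        c' s(v, u) ≠ c' s(v, u') := by
      intro u u' h h' hne
      refine hc2 _ ((G.mem_edgeSet).mpr h) _ ((G.mem_edgeSet).mpr h')
        ?_ ⟨v, Sym2.mem_mk_left v u, Sym2.mem_mk_left v u'⟩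
      intro he
      exact hne (Sym2.congr_right.mp he)
    have n12 : u₁ ≠ u₂ := by simp [hu1, hu2, Prod.ext_iff, Fin.ext_iff]
    have n13 : u₁ ≠ u₃ := by simp [hu1, hu3, Prod.ext_iff, Fin.ext_iff]
    have n14 : u₁ ≠ u₄ := by simp [hu1, hu4, Prod.ext_iff, Fin.ext_iff]
    have n23 : u₂ ≠ u₃ := by simp [hu2, hu3, Prod.ext_iff, Fin.ext_iff]
    have n24 : u₂ ≠ u₄ := by simp [hu2, hu4, Prod.ext_iff, Fin.ext_iff]
    have n34 : u₃ ≠ u₄ := by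
      simp only [hu3, hu4, Prod.ext_iff, Fin.ext_iff, ne_eq, not_and]
      intro _; omega
    have d12 := hd _ _ a1 a2 n12
    have d13 := hd _ _ a1 a3 n13
    have d14 := hd _ _ a1 a4 n14
    have d23 := hd _ _ a2 a3 n23
    have d24 := hd _ _ a2 a4 n24
    have d34 := hd _ _ a3 a4 n34
    have hsub : ({c' s(v, u₁), c' s(v, u₂), c' s(v, u₃), c' s(v, u₄)} : Finset ℕ)
        ⊆ Finset.Icc 1 t := by
      simp only [Finset.insert_subset_iff, Finset.singleton_subset_iff]
      exact ⟨hc1 _ ((G.mem_edgeSet).mpr a1), hc1 _ ((G.mem_edgeSet).mpr a2),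
        hc1 _ ((G.mem_edgeSet).mpr a3), hc1 _ ((G.mem_edgeSet).mpr a4)⟩
    have hcard : ({c' s(v, u₁), c' s(v, u₂), c' s(v, u₃), c' s(v, u₄)} : Finset ℕ).card
        = 4 := by
      rw [Finset.card_insert_of_notMem (by simp [d12, d13, d14]),
        Finset.card_insert_of_notMem (by simp [d23, d24]),
        Finset.card_insert_of_notMem (by simp [d34]), Finset.card_singleton]
    have := Finset.card_le_card hsub
    rw [hcard, Nat.card_Icc] at this
    omega
  refine ⟨h4, ?_⟩
  have hmem : 4 ∈ {t | HasIntervalColoring G t} := h4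
  refine le_antisymm (Nat.sInf_le hmem) ?_
  exact hlow _ (Nat.sInf_mem ⟨4, hmem⟩)
end

section
/- For every odd m ≥ 3 and every n ≥ 1, the cylinder C(m, 2n+1) = P_m □ C_{2n+1} admits no interval t-coloring with t ≤ 5; that is, every interval coloring of C(m,2n+1) uses at least 6 colors. -/
open SimpleGraph

lemma aux_add_ne_sub (n : ℕ) (hn : 1 ≤ n) (j : Fin (2*n+1)) : j + 1 ≠ j - 1 := by
  intro h
  have h2 : j + 2 = j := by
    have e : j + 2 = (j + 1) + 1 := by ext; simp [Fin.val_add]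
    rw [e, h]; exact sub_add_cancel j 1
  have h3 : (2 : Fin (2*n+1)) = 0 := by
    have := congrArg (· - j) h2; simpa [add_comm, add_sub_cancel_right] using this
  have h4 : ((2 : Fin (2*n+1))).val = 0 := by rw [h3]; rfl
  have e2 : (2 : Fin (2*n+1)) = (1 : Fin (2*n+1)) + 1 := by ext; simp [Fin.val_add]
  rw [e2, Fin.val_add_eq_of_add_lt] at h4 <;>
    simp only [Fin.val_one', Nat.mod_eq_of_lt (show (1:ℕ) < 2*n+1 by omega)] at * <;> omega

lemma aux_val_one (n : ℕ) (hn : 1 ≤ n) : ((1 : Fin (2*n+1))).val = 1 := by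
  rw [Fin.val_one']; exact Nat.mod_eq_of_lt (by omega)

theorem stmt11 (m n : ℕ) (hm : 3 ≤ m) (hmo : Odd m) (hn : 1 ≤ n) :
    ∀ t ≤ 5, ¬ HasIntervalColoring (pathGraph m □ cycleGraph (2 * n + 1)) t := by
  intro t ht hcol
  obtain ⟨c, hbound, hproper, -, hint⟩ := hcol
  set G := pathGraph m □ cycleGraph (2 * n + 1) with hGdef
  -- every vertex is incident to a unique edge of color 3
  have key : ∀ v : Fin m × Fin (2*n+1), ∃! w, G.Adj v w ∧ c s(v, w) = 3 := by
    intro v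
    obtain ⟨i, j⟩ := v
    -- three neighbors of (i, j)
    set i' : Fin m := if h : i.val + 1 < m then ⟨i.val + 1, h⟩ else ⟨i.val - 1, by omega⟩ with hi'
    have hi'ne : i' ≠ i := by
      have hiLt := i.isLt
      rw [hi']; split <;> (intro h; apply_fun Fin.val at h; simp only [Fin.val_mk] at h; omega)
    have hpath : (pathGraph m).Adj i i' := by
      have hiLt := i.isLt
      rw [pathGraph_adj, hi']
      split
      · left; simp
      · right; simp only [Fin.val_mk]; omega
    have hadj3 : G.Adj (i, j) (i', j) := by
      rw [hGdef, boxProd_adj]; exact Or.inl ⟨hpath, rfl⟩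
    have hcyc1 : (cycleGraph (2*n+1)).Adj j (j + 1) := by
      rw [cycleGraph_adj']
      right
      rw [add_sub_cancel_left, aux_val_one n hn]
    have hadj1 : G.Adj (i, j) (i, j + 1) := by
      rw [hGdef, boxProd_adj]; exact Or.inr ⟨hcyc1, rfl⟩
    have hcyc2 : (cycleGraph (2*n+1)).Adj j (j - 1) := by
      rw [cycleGraph_adj']
      left
      rw [sub_sub_cancel, aux_val_one n hn]
    have hadj2 : G.Adj (i, j) (i, j - 1) := by
      rw [hGdef, boxProd_adj]; exact Or.inr ⟨hcyc2, rfl⟩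
    -- the three edges are distinct
    have hw12 : (i, j + 1) ≠ ((i, j - 1) : Fin m × Fin (2*n+1)) := by
      intro h; exact aux_add_ne_sub n hn j (congrArg Prod.snd h)
    have hw13 : (i, j + 1) ≠ ((i', j) : Fin m × Fin (2*n+1)) := by
      intro h; exact hi'ne (congrArg Prod.fst h).symm
    have hw23 : (i, j - 1) ≠ ((i', j) : Fin m × Fin (2*n+1)) := by
      intro h; exact hi'ne (congrArg Prod.fst h).symm
    -- colors of the three edges
    set c1 := c s((i, j), (i, j + 1)) with hc1
    set c2 := c s((i, j), (i, j - 1)) with hc2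
    set c3 := c s((i, j), (i', j)) with hc3
    have he1 : s((i, j), (i, j + 1)) ∈ G.edgeSet := hadj1
    have he2 : s((i, j), (i, j - 1)) ∈ G.edgeSet := hadj2
    have he3 : s((i, j), (i', j)) ∈ G.edgeSet := hadj3
    have hmem : ∀ w : Fin m × Fin (2*n+1), (i, j) ∈ s((i, j), w) := fun w => Sym2.mem_mk_left _ _
    have hd12 : c1 ≠ c2 :=
      hproper _ he1 _ he2 (by simp only [ne_eq, Sym2.congr_right]; exact hw12) ⟨(i,j), hmem _, hmem _⟩
    have hd13 : c1 ≠ c3 :=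
      hproper _ he1 _ he3 (by simp only [ne_eq, Sym2.congr_right]; exact hw13) ⟨(i,j), hmem _, hmem _⟩
    have hd23 : c2 ≠ c3 :=
      hproper _ he2 _ he3 (by simp only [ne_eq, Sym2.congr_right]; exact hw23) ⟨(i,j), hmem _, hmem _⟩
    have hb1 := hbound _ he1
    have hb2 := hbound _ he2
    have hb3 := hbound _ he3
    rw [Finset.mem_Icc] at hb1 hb2 hb3
    -- one of the colors is ≤ 3 and one is ≥ 3
    have hlo : c1 ≤ 3 ∨ c2 ≤ 3 ∨ c3 ≤ 3 := by omega
    have hhi : 3 ≤ c1 ∨ 3 ≤ c2 ∨ 3 ≤ c3 := by omega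
    have hex1 : ∃ e ∈ G.edgeSet, (i, j) ∈ e ∧ c e = c1 := ⟨_, he1, hmem _, rfl⟩
    have hex2 : ∃ e ∈ G.edgeSet, (i, j) ∈ e ∧ c e = c2 := ⟨_, he2, hmem _, rfl⟩
    have hex3 : ∃ e ∈ G.edgeSet, (i, j) ∈ e ∧ c e = c3 := ⟨_, he3, hmem _, rfl⟩
    have h3 : ∃ e ∈ G.edgeSet, (i, j) ∈ e ∧ c e = 3 := by
      rcases hlo with h | h | h <;> rcases hhi with h' | h' | h'
      all_goals first
        | exact hint _ _ _ 3 hex1 hex1 h h'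
        | exact hint _ _ _ 3 hex1 hex2 h h'
        | exact hint _ _ _ 3 hex1 hex3 h h'
        | exact hint _ _ _ 3 hex2 hex1 h h'
        | exact hint _ _ _ 3 hex2 hex2 h h'
        | exact hint _ _ _ 3 hex2 hex3 h h'
        | exact hint _ _ _ 3 hex3 hex1 h h'
        | exact hint _ _ _ 3 hex3 hex2 h h'
        | exact hint _ _ _ 3 hex3 hex3 h h'
    obtain ⟨e, heE, hve, hc3e⟩ := h3
    obtain ⟨w, rfl⟩ := Sym2.mem_iff_exists.mp hve
    refine ⟨w, ⟨heE, hc3e⟩, ?_⟩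
    rintro w' ⟨hw'adj, hw'c⟩
    by_contra hne
    exact hproper _ hw'adj _ heE (by simp only [ne_eq, Sym2.congr_right]; exact hne)
      ⟨(i, j), hmem _, hmem _⟩ (hw'c.trans hc3e.symm)
  -- color-3 edges form a perfect matching
  let M : G.Subgraph :=
    { verts := Set.univ
      Adj := fun v w => G.Adj v w ∧ c s(v, w) = 3
      adj_sub := fun h => h.1
      edge_vert := fun _ => Set.mem_univ _
      symm := ⟨fun v w h => ⟨h.1.symm, by rw [Sym2.eq_swap]; exact h.2⟩⟩ }
  have hpm : M.IsPerfectMatching := Subgraph.isPerfectMatching_iff.mpr key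
  have heven := hpm.even_card
  rw [Fintype.card_prod, Fintype.card_fin, Fintype.card_fin] at heven
  have hodd : Odd (m * (2 * n + 1)) := hmo.mul (odd_two_mul_add_one n)
  exact (Nat.not_even_iff_odd.mpr hodd) heven
end

section
/- For every odd m ≥ 3 and every n ≥ 1, the cylinder C(m, 2n+1) = P_m □ C_{2n+1} admits an interval 6-coloring; combined with the lower bound, w(C(m,2n+1)) = 6 for odd m ≥ 3. -/
open SimpleGraph

namespace IC12

def hcol (m k i j : ℕ) : ℕ :=
  if i + 1 = m then (if j + 2 = k then 5 else if j % 2 = 0 then 3 else 2)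
  else if j % 2 = 0 then 2 else 3

def vcol (m k i j : ℕ) : ℕ :=
  if i % 2 = 0 then (if j = 0 then 3 else if j + 1 = k then 5 else 1)
  else if i + 2 = m then (if j = 0 then 5 else if j + 1 = k then 6 else 4)
  else (if j = 0 then 1 else if j + 1 = k then 2 else 4)

def CL (m k i j : ℕ) : ℕ := if j = 0 then 4 else hcol m k i (j - 1)
def CR (m k i j : ℕ) : ℕ := if j + 1 = k then 4 else hcol m k i j
def CU (m k i j : ℕ) : ℕ := vcol m k (i - 1) j
def CD (m k i j : ℕ) : ℕ := vcol m k i j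

def gfun (m k i j i' j' : ℕ) : ℕ :=
  if i = i' ∧ j + 1 = j' then hcol m k i j
  else if i = i' ∧ j + 1 = k ∧ j' = 0 then 4
  else if j = j' ∧ i + 1 = i' then vcol m k i j
  else 0

def ffun (m k i j i' j' : ℕ) : ℕ := gfun m k i j i' j' + gfun m k i' j' i j

lemma ffun_comm (m k i j i' j' : ℕ) : ffun m k i j i' j' = ffun m k i' j' i j :=
  Nat.add_comm _ _

def Rel (m k i j i' j' : ℕ) : Prop :=
  (j = j' ∧ (i + 1 = i' ∨ i' + 1 = i)) ∨
  (i = i' ∧ (j + 1 = j' ∨ j' + 1 = j ∨ (j + 1 = k ∧ j' = 0) ∨ (j' + 1 = k ∧ j = 0)))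

lemma ffun_right (m k i j : ℕ) (hk : 3 ≤ k) (hj : j + 1 < k) :
    ffun m k i j i (j + 1) = hcol m k i j := by
  unfold ffun gfun
  rw [if_pos ⟨rfl, rfl⟩, if_neg (by omega), if_neg (by omega), if_neg (by omega)]
  exact Nat.add_zero _

lemma ffun_seamR (m k i j : ℕ) (hk : 3 ≤ k) (hj : j + 1 = k) :
    ffun m k i j i 0 = 4 := by
  unfold ffun gfun
  rw [if_neg (by omega), if_pos ⟨rfl, hj, rfl⟩, if_neg (by omega), if_neg (by omega),
    if_neg (by omega)]

lemma ffun_down (m k i j : ℕ) : ffun m k i j (i + 1) j = vcol m k i j := by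
  unfold ffun gfun
  rw [if_neg (by omega), if_neg (by omega), if_pos ⟨rfl, rfl⟩, if_neg (by omega),
    if_neg (by omega), if_neg (by omega)]
  exact Nat.add_zero _

lemma classify (m k i j i' j' : ℕ) (hk : 3 ≤ k)
    (hj : j < k) (hi' : i' < m) (hj' : j' < k)
    (hrel : Rel m k i j i' j') :
    (i' = i ∧ j' = (if j = 0 then k - 1 else j - 1) ∧ ffun m k i j i' j' = CL m k i j) ∨
    (i' = i ∧ j' = (if j + 1 = k then 0 else j + 1) ∧ ffun m k i j i' j' = CR m k i j) ∨
    (1 ≤ i ∧ i' = i - 1 ∧ j' = j ∧ ffun m k i j i' j' = CU m k i j) ∨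
    (i' = i + 1 ∧ j' = j ∧ ffun m k i j i' j' = CD m k i j) := by
  rcases hrel with ⟨hjj, hii | hii⟩ | ⟨hii, h | h | ⟨h1, h2⟩ | ⟨h1, h2⟩⟩
  · -- down
    subst hjj
    right; right; right
    exact ⟨hii.symm, rfl, by rw [← hii, ffun_down]; rfl⟩
  · -- up
    subst hjj
    right; right; left
    refine ⟨by omega, by omega, rfl, ?_⟩
    rw [ffun_comm, show i = i' + 1 by omega, ffun_down]
    unfold CU
    rw [show i' + 1 - 1 = i' by omega]
  · -- right normal
    subst hii h
    right; left
    refine ⟨rfl, by rw [if_neg (by omega)], ?_⟩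
    rw [ffun_right m k i j hk (by omega)]
    unfold CR
    rw [if_neg (by omega)]
  · -- left normal
    subst hii
    left
    refine ⟨rfl, by rw [if_neg (by omega)]; omega, ?_⟩
    rw [ffun_comm, show j = j' + 1 by omega, ffun_right m k i j' hk (by omega)]
    unfold CL
    rw [if_neg (by omega), show j' + 1 - 1 = j' by omega]
  · -- seam right
    subst hii h2
    right; left
    refine ⟨rfl, by rw [if_pos h1], ?_⟩
    rw [ffun_seamR m k i j hk h1]
    unfold CR
    rw [if_pos h1]
  · -- seam left
    subst hii h2
    left
    refine ⟨rfl, by rw [if_pos rfl]; omega, ?_⟩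
    rw [ffun_comm, ffun_seamR m k i j' hk h1]
    unfold CL
    rw [if_pos rfl]

lemma fin_sub_val (k : ℕ) (hk : 3 ≤ k) (a b : Fin k) :
    (a - b).val = 1 ↔ (b.val + 1 = a.val ∨ (b.val + 1 = k ∧ a.val = 0)) := by
  have ha := a.isLt
  have hb := b.isLt
  rw [Fin.sub_def]
  simp only
  rcases le_or_gt b.val a.val with h | h
  · rw [show k - b.val + a.val = (a.val - b.val) + k by omega, Nat.add_mod_right,
      Nat.mod_eq_of_lt (by omega)]
    omega
  · rw [Nat.mod_eq_of_lt (by omega)]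
    omega

open SimpleGraph in
lemma adj_iff (m k : ℕ) (hk : 3 ≤ k) (u v : Fin m × Fin k) :
    (pathGraph m □ cycleGraph k).Adj u v ↔ Rel m k u.1.1 u.2.1 v.1.1 v.2.1 := by
  rw [SimpleGraph.boxProd_adj, pathGraph_adj, cycleGraph_adj', fin_sub_val k hk,
    fin_sub_val k hk, Fin.ext_iff (a := u.2), Fin.ext_iff (a := u.1)]
  unfold Rel
  omega

def ccol (m k : ℕ) : Sym2 (Fin m × Fin k) → ℕ :=
  Sym2.lift ⟨fun u v => ffun m k u.1.1 u.2.1 v.1.1 v.2.1,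
    fun u v => ffun_comm m k u.1.1 u.2.1 v.1.1 v.2.1⟩

lemma ccol_mk (m k : ℕ) (u v : Fin m × Fin k) :
    ccol m k s(u, v) = ffun m k u.1.1 u.2.1 v.1.1 v.2.1 := rfl

lemma right_edge (m k : ℕ) (hk : 3 ≤ k) (v : Fin m × Fin k) :
    ∃ w : Fin m × Fin k, (pathGraph m □ cycleGraph k).Adj v w ∧
      ccol m k s(v, w) = CR m k v.1.1 v.2.1 ∧ w.1.1 = v.1.1 ∧
      w.2.1 = (if v.2.1 + 1 = k then 0 else v.2.1 + 1) := by
  have hj := v.2.isLt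
  refine ⟨(v.1, ⟨if v.2.1 + 1 = k then 0 else v.2.1 + 1, by split_ifs <;> omega⟩),
    ?_, ?_, rfl, rfl⟩
  · rw [adj_iff m k hk]
    unfold Rel
    dsimp only
    split_ifs <;> omega
  · rw [ccol_mk]
    dsimp only
    split_ifs with h
    · rw [ffun_seamR m k _ _ hk h]
      unfold CR
      rw [if_pos h]
    · rw [ffun_right m k _ _ hk (by omega)]
      unfold CR
      rw [if_neg h]

lemma left_edge (m k : ℕ) (hk : 3 ≤ k) (v : Fin m × Fin k) :
    ∃ w : Fin m × Fin k, (pathGraph m □ cycleGraph k).Adj v w ∧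
      ccol m k s(v, w) = CL m k v.1.1 v.2.1 ∧ w.1.1 = v.1.1 ∧
      w.2.1 = (if v.2.1 = 0 then k - 1 else v.2.1 - 1) := by
  have hj := v.2.isLt
  refine ⟨(v.1, ⟨if v.2.1 = 0 then k - 1 else v.2.1 - 1, by split_ifs <;> omega⟩),
    ?_, ?_, rfl, rfl⟩
  · rw [adj_iff m k hk]
    unfold Rel
    dsimp only
    split_ifs <;> omega
  · rw [ccol_mk]
    dsimp only
    split_ifs with h
    · rw [show v.2.1 = 0 from h, ffun_comm, ffun_seamR m k _ _ hk (by omega)]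
      unfold CL
      rw [if_pos rfl]
    · obtain ⟨j0, hj0⟩ : ∃ j0, v.2.1 = j0 + 1 := ⟨v.2.1 - 1, by omega⟩
      rw [hj0, Nat.add_sub_cancel, ffun_comm, ffun_right m k _ _ hk (by omega)]
      unfold CL
      rw [if_neg (by omega), Nat.add_sub_cancel]

lemma down_edge (m k : ℕ) (hk : 3 ≤ k) (v : Fin m × Fin k) (hd : v.1.1 + 1 < m) :
    ∃ w : Fin m × Fin k, (pathGraph m □ cycleGraph k).Adj v w ∧
      ccol m k s(v, w) = CD m k v.1.1 v.2.1 ∧ w.1.1 = v.1.1 + 1 ∧ w.2.1 = v.2.1 := by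
  refine ⟨(⟨v.1.1 + 1, by omega⟩, v.2), ?_, ?_, rfl, rfl⟩
  · rw [adj_iff m k hk]
    unfold Rel
    dsimp only
    omega
  · rw [ccol_mk]
    dsimp only
    rw [ffun_down]
    rfl

lemma up_edge (m k : ℕ) (hk : 3 ≤ k) (v : Fin m × Fin k) (hd : 1 ≤ v.1.1) :
    ∃ w : Fin m × Fin k, (pathGraph m □ cycleGraph k).Adj v w ∧
      ccol m k s(v, w) = CU m k v.1.1 v.2.1 ∧ w.1.1 = v.1.1 - 1 ∧ w.2.1 = v.2.1 := by
  refine ⟨(⟨v.1.1 - 1, by omega⟩, v.2), ?_, ?_, rfl, rfl⟩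
  · rw [adj_iff m k hk]
    unfold Rel
    dsimp only
    omega
  · rw [ccol_mk]
    dsimp only
    obtain ⟨i0, hi0⟩ : ∃ i0, v.1.1 = i0 + 1 := ⟨v.1.1 - 1, by omega⟩
    rw [hi0, Nat.add_sub_cancel, ffun_comm, ffun_down]
    unfold CU
    rw [Nat.add_sub_cancel]

lemma distinct (m k i j : ℕ) (hm : 3 ≤ m) (hmo : m % 2 = 1) (hk : 3 ≤ k)
    (hko : k % 2 = 1) (hi : i < m) (hj : j < k) :
    (CL m k i j ≠ CR m k i j) ∧
    (1 ≤ i → CL m k i j ≠ CU m k i j ∧ CR m k i j ≠ CU m k i j) ∧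
    (i + 1 < m → CL m k i j ≠ CD m k i j ∧ CR m k i j ≠ CD m k i j) ∧
    (1 ≤ i → i + 1 < m → CU m k i j ≠ CD m k i j) := by
  unfold CL CR CU CD hcol vcol
  split_ifs <;> omega

lemma range_dir (m k i j : ℕ) (hm : 3 ≤ m) (hk : 3 ≤ k) (hi : i < m) (hj : j < k) :
    (1 ≤ CL m k i j ∧ CL m k i j ≤ 6) ∧ (1 ≤ CR m k i j ∧ CR m k i j ≤ 6) ∧
    (1 ≤ CU m k i j ∧ CU m k i j ≤ 6) ∧ (1 ≤ CD m k i j ∧ CD m k i j ≤ 6) := by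
  unfold CL CR CU CD hcol vcol
  split_ifs <;> omega

lemma incident_class (m k : ℕ) (hk : 3 ≤ k) {e : Sym2 (Fin m × Fin k)}
    (he : e ∈ (pathGraph m □ cycleGraph k).edgeSet) {v : Fin m × Fin k} (hv : v ∈ e) :
    ccol m k e = CL m k v.1.1 v.2.1 ∨ ccol m k e = CR m k v.1.1 v.2.1 ∨
    (1 ≤ v.1.1 ∧ ccol m k e = CU m k v.1.1 v.2.1) ∨
    (v.1.1 + 1 < m ∧ ccol m k e = CD m k v.1.1 v.2.1) := by
  obtain ⟨w, rfl⟩ := Sym2.mem_iff_exists.mp hv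
  rw [SimpleGraph.mem_edgeSet] at he
  have hcls := classify m k v.1.1 v.2.1 w.1.1 w.2.1 hk v.2.isLt w.1.isLt w.2.isLt
    ((adj_iff m k hk v w).mp he)
  rw [ccol_mk]
  have hwm := w.1.isLt
  rcases hcls with ⟨_, _, h⟩ | ⟨_, _, h⟩ | ⟨g, _, _, h⟩ | ⟨a, _, h⟩
  · exact Or.inl h
  · exact Or.inr (Or.inl h)
  · exact Or.inr (Or.inr (Or.inl ⟨g, h⟩))
  · exact Or.inr (Or.inr (Or.inr ⟨by omega, h⟩))

lemma proper_at (m k : ℕ) (hm : 3 ≤ m) (hmo : m % 2 = 1) (hk : 3 ≤ k) (hko : k % 2 = 1)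
    (v w1 w2 : Fin m × Fin k) (hne : w1 ≠ w2)
    (h1 : (pathGraph m □ cycleGraph k).Adj v w1)
    (h2 : (pathGraph m □ cycleGraph k).Adj v w2) :
    ccol m k s(v, w1) ≠ ccol m k s(v, w2) := by
  have hext : ∀ a b : Fin m × Fin k, a.1.1 = b.1.1 → a.2.1 = b.2.1 → a = b := fun a b hx hy =>
    Prod.ext (Fin.ext hx) (Fin.ext hy)
  have c1 := classify m k v.1.1 v.2.1 w1.1.1 w1.2.1 hk v.2.isLt w1.1.isLt w1.2.isLt
    ((adj_iff m k hk v w1).mp h1)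
  have c2 := classify m k v.1.1 v.2.1 w2.1.1 w2.2.1 hk v.2.isLt w2.1.isLt w2.2.isLt
    ((adj_iff m k hk v w2).mp h2)
  obtain ⟨dLR, dU, dD, dUD⟩ := distinct m k v.1.1 v.2.1 hm hmo hk hko v.1.isLt v.2.isLt
  rw [ccol_mk, ccol_mk]
  rcases c1 with ⟨a1, b1, e1⟩ | ⟨a1, b1, e1⟩ | ⟨g1, a1, b1, e1⟩ | ⟨a1, b1, e1⟩ <;>
    rcases c2 with ⟨a2, b2, e2⟩ | ⟨a2, b2, e2⟩ | ⟨g2, a2, b2, e2⟩ | ⟨a2, b2, e2⟩ <;>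
    rw [e1, e2]
  · exact absurd (hext w1 w2 (a1.trans a2.symm) (b1.trans b2.symm)) hne
  · exact dLR
  · exact (dU g2).1
  · exact (dD (by have := w2.1.isLt; omega)).1
  · exact Ne.symm dLR
  · exact absurd (hext w1 w2 (a1.trans a2.symm) (b1.trans b2.symm)) hne
  · exact (dU g2).2
  · exact (dD (by have := w2.1.isLt; omega)).2
  · exact Ne.symm (dU g1).1
  · exact Ne.symm (dU g1).2
  · exact absurd (hext w1 w2 (a1.trans a2.symm) (b1.trans b2.symm)) hne
  · exact dUD g1 (by have := w2.1.isLt; omega)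
  · exact Ne.symm (dD (by have := w1.1.isLt; omega)).1
  · exact Ne.symm (dD (by have := w1.1.isLt; omega)).2
  · exact Ne.symm (dUD g2 (by have := w1.1.isLt; omega))
  · exact absurd (hext w1 w2 (a1.trans a2.symm) (b1.trans b2.symm)) hne

set_option maxHeartbeats 4000000 in
lemma window (m k i j t₁ t₂ t : ℕ) (hm : 3 ≤ m) (hmo : m % 2 = 1) (hk : 3 ≤ k)
    (hko : k % 2 = 1) (hi : i < m) (hj : j < k)
    (h1 : t₁ = CL m k i j ∨ t₁ = CR m k i j ∨ (1 ≤ i ∧ t₁ = CU m k i j) ∨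
      (i + 1 < m ∧ t₁ = CD m k i j))
    (h2 : t₂ = CL m k i j ∨ t₂ = CR m k i j ∨ (1 ≤ i ∧ t₂ = CU m k i j) ∨
      (i + 1 < m ∧ t₂ = CD m k i j))
    (hl : t₁ ≤ t) (hr : t ≤ t₂) :
    t = CL m k i j ∨ t = CR m k i j ∨ (1 ≤ i ∧ t = CU m k i j) ∨
      (i + 1 < m ∧ t = CD m k i j) := by
  unfold CL CR CU CD hcol vcol at *
  split_ifs at * <;> omega

lemma hasIC (m n : ℕ) (hm : 3 ≤ m) (hmo : m % 2 = 1) (hn : 1 ≤ n) :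
    HasIntervalColoring (pathGraph m □ cycleGraph (2 * n + 1)) 6 := by
  set k := 2 * n + 1 with hkdef
  have hk : 3 ≤ k := by omega
  have hko : k % 2 = 1 := by omega
  refine ⟨ccol m k, ?_, ?_, ?_, ?_⟩
  · -- range
    intro e he
    revert he
    refine Sym2.ind (fun a b => ?_) e
    intro he
    have hcls := incident_class m k hk he (Sym2.mem_mk_left a b)
    obtain ⟨RL, RR, RU, RD⟩ := range_dir m k a.1.1 a.2.1 hm hk a.1.isLt a.2.isLt
    rw [Finset.mem_Icc]
    rcases hcls with h | h | ⟨-, h⟩ | ⟨-, h⟩ <;> rw [h]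
    · exact RL
    · exact RR
    · exact RU
    · exact RD
  · -- proper
    rintro e1 he1 e2 he2 hne ⟨v, hv1, hv2⟩
    obtain ⟨w1, rfl⟩ := Sym2.mem_iff_exists.mp hv1
    obtain ⟨w2, rfl⟩ := Sym2.mem_iff_exists.mp hv2
    rw [SimpleGraph.mem_edgeSet] at he1 he2
    exact proper_at m k hm hmo hk hko v w1 w2 (fun h => hne (by rw [h])) he1 he2
  · -- every color used
    intro κ hκ
    rw [Finset.mem_Icc] at hκ
    obtain ⟨hκ1, hκ2⟩ := hκ
    interval_cases κ
    · obtain ⟨w, hadj, hc, -, -⟩ :=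
        down_edge m k hk (⟨0, by omega⟩, ⟨1, by omega⟩) (by show 0 + 1 < m; omega)
      refine ⟨s(_, w), (SimpleGraph.mem_edgeSet _).mpr hadj, ?_⟩
      rw [hc]
      show CD m k 0 1 = 1
      unfold CD vcol
      split_ifs <;> first | omega | exact False.elim (by assumption)
    · obtain ⟨w, hadj, hc, -, -⟩ := right_edge m k hk (⟨0, by omega⟩, ⟨0, by omega⟩)
      refine ⟨s(_, w), (SimpleGraph.mem_edgeSet _).mpr hadj, ?_⟩
      rw [hc]
      show CR m k 0 0 = 2
      unfold CR hcol
      split_ifs <;> first | omega | exact False.elim (by assumption)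
    · obtain ⟨w, hadj, hc, -, -⟩ :=
        down_edge m k hk (⟨0, by omega⟩, ⟨0, by omega⟩) (by show 0 + 1 < m; omega)
      refine ⟨s(_, w), (SimpleGraph.mem_edgeSet _).mpr hadj, ?_⟩
      rw [hc]
      show CD m k 0 0 = 3
      unfold CD vcol
      split_ifs <;> first | omega | exact False.elim (by assumption)
    · obtain ⟨w, hadj, hc, -, -⟩ := right_edge m k hk (⟨0, by omega⟩, ⟨k - 1, by omega⟩)
      refine ⟨s(_, w), (SimpleGraph.mem_edgeSet _).mpr hadj, ?_⟩
      rw [hc]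
      show CR m k 0 (k - 1) = 4
      unfold CR hcol
      split_ifs <;> first | omega | exact False.elim (by assumption)
    · obtain ⟨w, hadj, hc, -, -⟩ :=
        down_edge m k hk (⟨0, by omega⟩, ⟨k - 1, by omega⟩) (by show 0 + 1 < m; omega)
      refine ⟨s(_, w), (SimpleGraph.mem_edgeSet _).mpr hadj, ?_⟩
      rw [hc]
      show CD m k 0 (k - 1) = 5
      unfold CD vcol
      split_ifs <;> first | omega | exact False.elim (by assumption)
    · obtain ⟨w, hadj, hc, -, -⟩ :=
        down_edge m k hk (⟨m - 2, by omega⟩, ⟨k - 1, by omega⟩) (by show m - 2 + 1 < m; omega)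
      refine ⟨s(_, w), (SimpleGraph.mem_edgeSet _).mpr hadj, ?_⟩
      rw [hc]
      show CD m k (m - 2) (k - 1) = 6
      unfold CD vcol
      split_ifs <;> first | omega | exact False.elim (by assumption)
  · -- interval property
    intro v t1 t2 t h1 h2 hl hr
    obtain ⟨e1, he1, hv1, hc1⟩ := h1
    obtain ⟨e2, he2, hv2, hc2⟩ := h2
    have A1 := incident_class m k hk he1 hv1
    have A2 := incident_class m k hk he2 hv2
    rw [hc1] at A1
    rw [hc2] at A2
    have W := window m k v.1.1 v.2.1 t1 t2 t hm hmo hk hko v.1.isLt v.2.isLt A1 A2 hl hr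
    rcases W with h | h | ⟨g, h⟩ | ⟨g, h⟩
    · obtain ⟨w, hadj, hc, -, -⟩ := left_edge m k hk v
      exact ⟨s(v, w), (SimpleGraph.mem_edgeSet _).mpr hadj, Sym2.mem_mk_left v w, by rw [hc, h]⟩
    · obtain ⟨w, hadj, hc, -, -⟩ := right_edge m k hk v
      exact ⟨s(v, w), (SimpleGraph.mem_edgeSet _).mpr hadj, Sym2.mem_mk_left v w, by rw [hc, h]⟩
    · obtain ⟨w, hadj, hc, -, -⟩ := up_edge m k hk v g
      exact ⟨s(v, w), (SimpleGraph.mem_edgeSet _).mpr hadj, Sym2.mem_mk_left v w, by rw [hc, h]⟩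
    · obtain ⟨w, hadj, hc, -, -⟩ := down_edge m k hk v g
      exact ⟨s(v, w), (SimpleGraph.mem_edgeSet _).mpr hadj, Sym2.mem_mk_left v w, by rw [hc, h]⟩

lemma lb (m n : ℕ) (hm : 3 ≤ m) (hmo : m % 2 = 1) (hn : 1 ≤ n) (t : ℕ)
    (h : HasIntervalColoring (pathGraph m □ cycleGraph (2 * n + 1)) t) : 6 ≤ t := by
  classical
  by_contra hlt
  push_neg at hlt
  obtain ⟨c, hrange, hproper, hused, hint⟩ := h
  have hk : 3 ≤ 2 * n + 1 := by omega
  -- every vertex is incident to an edge of color 3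
  have stepA : ∀ v : Fin m × Fin (2 * n + 1),
      ∃ e ∈ (pathGraph m □ cycleGraph (2 * n + 1)).edgeSet, v ∈ e ∧ c e = 3 := by
    intro v
    obtain ⟨wL, adjL, -, hL1, hL2⟩ := left_edge m (2 * n + 1) hk v
    obtain ⟨wR, adjR, -, hR1, hR2⟩ := right_edge m (2 * n + 1) hk v
    have hvert : ∃ w3 : Fin m × Fin (2 * n + 1),
        (pathGraph m □ cycleGraph (2 * n + 1)).Adj v w3 ∧ w3.1.1 ≠ v.1.1 := by
      by_cases hd : v.1.1 + 1 < m
      · obtain ⟨w, hadj, -, h1, -⟩ := down_edge m (2 * n + 1) hk v hd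
        exact ⟨w, hadj, by omega⟩
      · have h1le : 1 ≤ v.1.1 := by have := v.1.isLt; omega
        obtain ⟨w, hadj, -, h1, -⟩ := up_edge m (2 * n + 1) hk v h1le
        exact ⟨w, hadj, by omega⟩
    obtain ⟨w3, adj3, h3⟩ := hvert
    have hj := v.2.isLt
    have hLR : wL ≠ wR := by
      intro hEq
      have hval : wL.2.1 = wR.2.1 := by rw [hEq]
      rw [hL2, hR2] at hval
      split_ifs at hval <;> omega
    have hL3 : wL ≠ w3 := fun hEq => h3 (by rw [← hEq, hL1])
    have hR3 : wR ≠ w3 := fun hEq => h3 (by rw [← hEq, hR1])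
    have meL : s(v, wL) ∈ (pathGraph m □ cycleGraph (2 * n + 1)).edgeSet :=
      (SimpleGraph.mem_edgeSet _).mpr adjL
    have meR : s(v, wR) ∈ (pathGraph m □ cycleGraph (2 * n + 1)).edgeSet :=
      (SimpleGraph.mem_edgeSet _).mpr adjR
    have me3 : s(v, w3) ∈ (pathGraph m □ cycleGraph (2 * n + 1)).edgeSet :=
      (SimpleGraph.mem_edgeSet _).mpr adj3
    have dLR := hproper _ meL _ meR (fun h => hLR (Sym2.congr_right.mp h))
      ⟨v, Sym2.mem_mk_left _ _, Sym2.mem_mk_left _ _⟩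
    have dL3 := hproper _ meL _ me3 (fun h => hL3 (Sym2.congr_right.mp h))
      ⟨v, Sym2.mem_mk_left _ _, Sym2.mem_mk_left _ _⟩
    have dR3 := hproper _ meR _ me3 (fun h => hR3 (Sym2.congr_right.mp h))
      ⟨v, Sym2.mem_mk_left _ _, Sym2.mem_mk_left _ _⟩
    have rL := Finset.mem_Icc.mp (hrange _ meL)
    have rR := Finset.mem_Icc.mp (hrange _ meR)
    have r3 := Finset.mem_Icc.mp (hrange _ me3)
    have hone : c s(v, wL) ≤ 3 ∨ c s(v, wR) ≤ 3 ∨ c s(v, w3) ≤ 3 := by omega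
    have htwo : 3 ≤ c s(v, wL) ∨ 3 ≤ c s(v, wR) ∨ 3 ≤ c s(v, w3) := by omega
    rcases hone with h1 | h1 | h1 <;> rcases htwo with h2 | h2 | h2
    · exact hint v _ _ 3 ⟨_, meL, Sym2.mem_mk_left _ _, rfl⟩ ⟨_, meL, Sym2.mem_mk_left _ _, rfl⟩ h1 h2
    · exact hint v _ _ 3 ⟨_, meL, Sym2.mem_mk_left _ _, rfl⟩ ⟨_, meR, Sym2.mem_mk_left _ _, rfl⟩ h1 h2
    · exact hint v _ _ 3 ⟨_, meL, Sym2.mem_mk_left _ _, rfl⟩ ⟨_, me3, Sym2.mem_mk_left _ _, rfl⟩ h1 h2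
    · exact hint v _ _ 3 ⟨_, meR, Sym2.mem_mk_left _ _, rfl⟩ ⟨_, meL, Sym2.mem_mk_left _ _, rfl⟩ h1 h2
    · exact hint v _ _ 3 ⟨_, meR, Sym2.mem_mk_left _ _, rfl⟩ ⟨_, meR, Sym2.mem_mk_left _ _, rfl⟩ h1 h2
    · exact hint v _ _ 3 ⟨_, meR, Sym2.mem_mk_left _ _, rfl⟩ ⟨_, me3, Sym2.mem_mk_left _ _, rfl⟩ h1 h2
    · exact hint v _ _ 3 ⟨_, me3, Sym2.mem_mk_left _ _, rfl⟩ ⟨_, meL, Sym2.mem_mk_left _ _, rfl⟩ h1 h2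
    · exact hint v _ _ 3 ⟨_, me3, Sym2.mem_mk_left _ _, rfl⟩ ⟨_, meR, Sym2.mem_mk_left _ _, rfl⟩ h1 h2
    · exact hint v _ _ 3 ⟨_, me3, Sym2.mem_mk_left _ _, rfl⟩ ⟨_, me3, Sym2.mem_mk_left _ _, rfl⟩ h1 h2
  choose F hF1 hF2 hF3 using stepA
  have huniq : ∀ (v : Fin m × Fin (2 * n + 1)) (e : Sym2 (Fin m × Fin (2 * n + 1))),
      e ∈ (pathGraph m □ cycleGraph (2 * n + 1)).edgeSet → v ∈ e → c e = 3 → F v = e := by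
    intro v e he hv hce
    by_contra hne
    exact hproper (F v) (hF1 v) e he hne ⟨v, hF2 v, hv⟩ (by rw [hF3 v, hce])
  have hfib : ∀ e, e ∈ (pathGraph m □ cycleGraph (2 * n + 1)).edgeSet → c e = 3 →
      (Finset.univ.filter fun v => F v = e).card = 2 := by
    intro e
    induction e using Sym2.ind with
    | _ a b =>
      intro he hce
      have hab : a ≠ b := ((SimpleGraph.mem_edgeSet _).mp he).ne
      have hset : (Finset.univ.filter fun v => F v = s(a, b)) = {a, b} := by
        ext u
        simp only [Finset.mem_filter, Finset.mem_univ, true_and, Finset.mem_insert,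
          Finset.mem_singleton]
        constructor
        · intro hFu
          exact Sym2.mem_iff.mp (hFu ▸ hF2 u)
        · intro hu
          exact huniq u s(a, b) he (Sym2.mem_iff.mpr hu) hce
      rw [hset]
      exact Finset.card_pair hab
  have hcount : Fintype.card (Fin m × Fin (2 * n + 1)) = 2 * (Finset.univ.image F).card := by
    rw [← Finset.card_univ, Finset.card_eq_sum_card_fiberwise
      (fun x _ => Finset.mem_image_of_mem F (Finset.mem_univ x))]
    have hall : ∀ e ∈ Finset.univ.image F,
        (Finset.univ.filter fun v => F v = e).card = 2 := by
      intro e heS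
      obtain ⟨v0, -, rfl⟩ := Finset.mem_image.mp heS
      exact hfib (F v0) (hF1 v0) (hF3 v0)
    rw [Finset.sum_congr rfl hall, Finset.sum_const, smul_eq_mul, mul_comm]
  have hoddcard : Fintype.card (Fin m × Fin (2 * n + 1)) % 2 = 1 := by
    rw [Fintype.card_prod, Fintype.card_fin, Fintype.card_fin, Nat.mul_mod, hmo,
      show (2 * n + 1) % 2 = 1 by omega]
  omega

end IC12

theorem stmt12 (m n : ℕ) (hm : 3 ≤ m) (hmo : Odd m) (hn : 1 ≤ n) :
    HasIntervalColoring (pathGraph m □ cycleGraph (2 * n + 1)) 6 ∧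
    wlow (pathGraph m □ cycleGraph (2 * n + 1)) = 6 := by
  have hmo' : m % 2 = 1 := Nat.odd_iff.mp hmo
  have h1 := IC12.hasIC m n hm hmo' hn
  refine ⟨h1, ?_⟩
  have hmem : 6 ∈ {t | HasIntervalColoring (pathGraph m □ cycleGraph (2 * n + 1)) t} := h1
  unfold wlow
  exact le_antisymm (Nat.sInf_le hmem)
    (le_csInf ⟨6, hmem⟩ fun t ht => IC12.lb m n hm hmo' hn t ht)
end

section
/- For every m ≥ 1 and n ≥ 2, the cylinder C(2m, 2n) = P_{2m} □ C_{2n} admits an interval (4m + 2n − 2)-coloring; hence W(C(2m,2n)) ≥ 4m + 2n − 2. -/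
open SimpleGraph

def gam (n j : ℕ) : ℕ := if j < n then 2*j+2 else 2*(2*n-1-j)+3
def pii (n j : ℕ) : ℕ := if j = 0 then 1 else if j < n then 2*j+1 else if j = n then 2*n+2 else 4*n+2-2*j
def prv (n j : ℕ) : ℕ := if j = 0 then 2*n-1 else j-1
def ell (n j : ℕ) : ℕ := min (gam n (prv n j)) (min (gam n j) (pii n j))

def colF (n i j i' j' : ℕ) : ℕ :=
  if i = i' then
    (if max j j' = min j j' + 1 then gam n (min j j') else gam n (max j j')) + 4*(i/2)
  else
    (if min i i' % 2 = 0 then pii n (min j j') else ell n (min j j') + 3) + 4*(min i i' / 2)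

lemma colF_symm (n i j i' j' : ℕ) : colF n i j i' j' = colF n i' j' i j := by
  unfold colF
  by_cases h : i = i'
  · subst h; rw [if_pos rfl, if_pos rfl, Nat.max_comm, Nat.min_comm]
  · rw [if_neg h, if_neg (fun hh : i' = i => h hh.symm), Nat.min_comm j' j, Nat.min_comm i' i]

def col (m n : ℕ) : Sym2 (Fin (2*m) × Fin (2*n)) → ℕ :=
  Sym2.lift ⟨fun u v => colF n u.1.val u.2.val v.1.val v.2.val,
    fun _ _ => colF_symm n _ _ _ _⟩

lemma col_mk (m n : ℕ) (u v : Fin (2*m) × Fin (2*n)) :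
    col m n s(u, v) = colF n u.1.val u.2.val v.1.val v.2.val := rfl

lemma colF_row (n a b b' : ℕ) (h : b' = b + 1) :
    colF n a b a b' = gam n b + 4*(a/2) := by
  unfold colF
  rw [if_pos rfl, Nat.max_eq_right (by omega), Nat.min_eq_left (by omega), if_pos (by omega)]

lemma colF_row_wrap (n a b b' : ℕ) (hn : 2 ≤ n) (h : b = 0) (h' : b' = 2*n-1) :
    colF n a b a b' = gam n (2*n-1) + 4*(a/2) := by
  unfold colF
  rw [if_pos rfl, Nat.max_eq_right (by omega), Nat.min_eq_left (by omega), if_neg (by omega), h']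

lemma colF_col (n a a' b : ℕ) (h : a' = a + 1) :
    colF n a b a' b = (if a % 2 = 0 then pii n b else ell n b + 3) + 4*(a/2) := by
  unfold colF
  rw [if_neg (by omega), Nat.min_eq_left (by omega), Nat.min_self]

lemma subval {N : ℕ} (a b : Fin N) : (a - b).val = ((N - b.val) + a.val) % N := by
  rw [Fin.sub_def]

lemma modchar {N a b : ℕ} (hN : 3 ≤ N) (ha : a < N) (hb : b < N) :
    ((N - b) + a) % N = 1 ↔ (a = b + 1 ∨ (a = 0 ∧ b + 1 = N)) := by
  rcases le_or_gt b a with h1 | h1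
  · have e : (N - b) + a = (a - b) + N := by omega
    rw [e, Nat.add_mod_right, Nat.mod_eq_of_lt (by omega)]
    omega
  · rw [Nat.mod_eq_of_lt (by omega)]
    omega

lemma cyc_adj {N : ℕ} (hN : 3 ≤ N) (u v : Fin N) :
    (cycleGraph N).Adj u v ↔
      (u.val + 1 = v.val ∨ v.val + 1 = u.val ∨
       (u.val = 0 ∧ v.val + 1 = N) ∨ (v.val = 0 ∧ u.val + 1 = N)) := by
  rw [cycleGraph_adj', subval, subval,
    modchar hN u.isLt v.isLt, modchar hN v.isLt u.isLt]
  omega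

lemma nbr (m n : ℕ) (hn : 2 ≤ n) (v w : Fin (2*m) × Fin (2*n))
    (h : (pathGraph (2*m) □ cycleGraph (2*n)).Adj v w) :
    (w.1.val = v.1.val ∧ (w.2.val = v.2.val + 1 ∨ (v.2.val + 1 = 2*n ∧ w.2.val = 0)) ∧
      col m n s(v,w) = gam n v.2.val + 4*(v.1.val/2)) ∨
    (w.1.val = v.1.val ∧ (v.2.val = w.2.val + 1 ∨ (w.2.val + 1 = 2*n ∧ v.2.val = 0)) ∧
      col m n s(v,w) = gam n (prv n v.2.val) + 4*(v.1.val/2)) ∨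
    (w.2.val = v.2.val ∧ w.1.val = v.1.val + 1 ∧
      ((v.1.val % 2 = 0 ∧ col m n s(v,w) = pii n v.2.val + 4*(v.1.val/2)) ∨
       (v.1.val % 2 = 1 ∧ col m n s(v,w) = ell n v.2.val + 3 + 4*(v.1.val/2)))) ∨
    (w.2.val = v.2.val ∧ w.1.val + 1 = v.1.val ∧
      ((w.1.val % 2 = 0 ∧ col m n s(v,w) = pii n v.2.val + 4*(w.1.val/2)) ∨
       (w.1.val % 2 = 1 ∧ col m n s(v,w) = ell n v.2.val + 3 + 4*(w.1.val/2)))) := by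
  rw [boxProd_adj] at h
  rcases h with ⟨hp, he⟩ | ⟨hc, he⟩
  · -- path step, he : v.2 = w.2
    have he2 : w.2.val = v.2.val := by rw [he]
    rw [pathGraph_adj] at hp
    rcases hp with hp | hp
    · -- down : v.1.val + 1 = w.1.val
      refine Or.inr (Or.inr (Or.inl ⟨he2, hp.symm, ?_⟩))
      have hcol : col m n s(v,w) =
          (if v.1.val % 2 = 0 then pii n v.2.val else ell n v.2.val + 3) + 4*(v.1.val/2) := by
        rw [col_mk, show w.1.val = v.1.val + 1 from hp.symm, he2,
          colF_col n v.1.val (v.1.val+1) v.2.val rfl]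
      rcases Nat.mod_two_eq_zero_or_one v.1.val with h2 | h2
      · exact Or.inl ⟨h2, by rw [hcol, if_pos h2]⟩
      · exact Or.inr ⟨h2, by rw [hcol, if_neg (by omega)]⟩
    · -- up : w.1.val + 1 = v.1.val
      refine Or.inr (Or.inr (Or.inr ⟨he2, hp, ?_⟩))
      have hcol : col m n s(v,w) =
          (if w.1.val % 2 = 0 then pii n v.2.val else ell n v.2.val + 3) + 4*(w.1.val/2) := by
        rw [col_mk, colF_symm, ← he2, colF_col n w.1.val v.1.val w.2.val hp.symm]
      rcases Nat.mod_two_eq_zero_or_one w.1.val with h2 | h2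
      · exact Or.inl ⟨h2, by rw [hcol, if_pos h2]⟩
      · exact Or.inr ⟨h2, by rw [hcol, if_neg (by omega)]⟩
  · -- cycle step, he : v.1 = w.1
    have he1 : w.1.val = v.1.val := by rw [he]
    rw [cyc_adj (by omega)] at hc
    rcases hc with hc | hc | hc | hc
    · refine Or.inl ⟨he1, Or.inl hc.symm, ?_⟩
      rw [col_mk, he1, colF_row n v.1.val v.2.val w.2.val hc.symm]
    · refine Or.inr (Or.inl ⟨he1, Or.inl hc.symm, ?_⟩)
      rw [col_mk, he1, colF_symm, colF_row n v.1.val w.2.val v.2.val hc.symm,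
        show prv n v.2.val = w.2.val from by unfold prv; rw [if_neg (by omega)]; omega]
    · refine Or.inr (Or.inl ⟨he1, Or.inr ⟨by omega, hc.1⟩, ?_⟩)
      rw [col_mk, he1, colF_row_wrap n v.1.val v.2.val w.2.val hn hc.1 (by omega),
        show prv n v.2.val = 2*n-1 from by unfold prv; rw [if_pos hc.1]]
    · refine Or.inl ⟨he1, Or.inr ⟨by omega, hc.1⟩, ?_⟩
      rw [col_mk, he1, colF_symm, colF_row_wrap n v.1.val w.2.val v.2.val hn hc.1 (by omega),
        show (2*n-1 : ℕ) = v.2.val from by omega]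

lemma esplit (m n : ℕ) (e : Sym2 (Fin (2*m) × Fin (2*n)))
    (he : e ∈ (pathGraph (2*m) □ cycleGraph (2*n)).edgeSet)
    (v : Fin (2*m) × Fin (2*n)) (hv : v ∈ e) :
    ∃ w, (pathGraph (2*m) □ cycleGraph (2*n)).Adj v w ∧ e = s(v, w) := by
  induction e using Sym2.ind with
  | _ a b =>
    rcases Sym2.mem_iff.mp hv with rfl | rfl
    · exact ⟨b, (mem_edgeSet _).mp he, rfl⟩
    · exact ⟨a, ((mem_edgeSet _).mp he).symm, Sym2.eq_swap⟩

lemma realize (m n : ℕ) (hm : 1 ≤ m) (hn : 2 ≤ n) (v : Fin (2*m) × Fin (2*n)) (k : ℕ)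
    (hk : k = gam n v.2.val + 4*(v.1.val/2) ∨
          k = gam n (prv n v.2.val) + 4*(v.1.val/2) ∨
          (v.1.val + 1 < 2*m ∧ v.1.val % 2 = 0 ∧ k = pii n v.2.val + 4*(v.1.val/2)) ∨
          (v.1.val + 1 < 2*m ∧ v.1.val % 2 = 1 ∧ k = ell n v.2.val + 3 + 4*(v.1.val/2)) ∨
          (0 < v.1.val ∧ (v.1.val-1) % 2 = 0 ∧ k = pii n v.2.val + 4*((v.1.val-1)/2)) ∨
          (0 < v.1.val ∧ (v.1.val-1) % 2 = 1 ∧ k = ell n v.2.val + 3 + 4*((v.1.val-1)/2))) :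
    ∃ e ∈ (pathGraph (2*m) □ cycleGraph (2*n)).edgeSet, v ∈ e ∧ col m n e = k := by
  have hjlt := v.2.isLt
  have hilt := v.1.isLt
  rcases hk with hk | hk | ⟨ha, hp, hk⟩ | ⟨ha, hp, hk⟩ | ⟨ha, hp, hk⟩ | ⟨ha, hp, hk⟩
  · -- C-next edge
    by_cases hw : v.2.val + 1 < 2*n
    · refine ⟨s(v, (v.1, ⟨v.2.val+1, hw⟩)), (mem_edgeSet _).mpr ?_, Sym2.mem_mk_left _ _, ?_⟩
      · exact boxProd_adj.mpr (Or.inr ⟨(cyc_adj (by omega) _ _).mpr (Or.inl rfl), rfl⟩)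
      · rw [col_mk, colF_row n v.1.val v.2.val (v.2.val+1) rfl]; omega
    · refine ⟨s(v, (v.1, ⟨0, by omega⟩)), (mem_edgeSet _).mpr ?_, Sym2.mem_mk_left _ _, ?_⟩
      · exact boxProd_adj.mpr (Or.inr ⟨(cyc_adj (by omega) _ _).mpr
          (Or.inr (Or.inr (Or.inr ⟨rfl, by omega⟩))), rfl⟩)
      · rw [col_mk, colF_symm, colF_row_wrap n v.1.val 0 v.2.val hn rfl (by omega),
          show (2*n-1 : ℕ) = v.2.val from by omega]
        omega
  · -- C-prev edge
    by_cases h0 : v.2.val = 0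
    · refine ⟨s(v, (v.1, ⟨2*n-1, by omega⟩)), (mem_edgeSet _).mpr ?_, Sym2.mem_mk_left _ _, ?_⟩
      · exact boxProd_adj.mpr (Or.inr ⟨(cyc_adj (by omega) _ _).mpr
          (Or.inr (Or.inr (Or.inl ⟨h0, by simp; omega⟩))), rfl⟩)
      · rw [col_mk, colF_row_wrap n v.1.val v.2.val (2*n-1) hn h0 rfl,
          show (2*n-1 : ℕ) = prv n v.2.val from by unfold prv; rw [if_pos h0]]
        omega
    · refine ⟨s(v, (v.1, ⟨v.2.val-1, by omega⟩)), (mem_edgeSet _).mpr ?_, Sym2.mem_mk_left _ _, ?_⟩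
      · exact boxProd_adj.mpr (Or.inr ⟨(cyc_adj (by omega) _ _).mpr
          (Or.inr (Or.inl (by simp; omega))), rfl⟩)
      · rw [col_mk, colF_symm, colF_row n v.1.val (v.2.val-1) v.2.val (by omega),
          show (v.2.val-1 : ℕ) = prv n v.2.val from by unfold prv; rw [if_neg h0]]
        omega
  · -- down edge, i even
    refine ⟨s(v, (⟨v.1.val+1, ha⟩, v.2)), (mem_edgeSet _).mpr ?_, Sym2.mem_mk_left _ _, ?_⟩
    · exact boxProd_adj.mpr (Or.inl ⟨pathGraph_adj.mpr (Or.inl rfl), rfl⟩)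
    · rw [col_mk, colF_col n v.1.val (v.1.val+1) v.2.val rfl, if_pos hp]; omega
  · -- down edge, i odd
    refine ⟨s(v, (⟨v.1.val+1, ha⟩, v.2)), (mem_edgeSet _).mpr ?_, Sym2.mem_mk_left _ _, ?_⟩
    · exact boxProd_adj.mpr (Or.inl ⟨pathGraph_adj.mpr (Or.inl rfl), rfl⟩)
    · rw [col_mk, colF_col n v.1.val (v.1.val+1) v.2.val rfl, if_neg (by omega)]; omega
  · -- up edge, i-1 even
    refine ⟨s(v, (⟨v.1.val-1, by omega⟩, v.2)), (mem_edgeSet _).mpr ?_, Sym2.mem_mk_left _ _, ?_⟩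
    · exact boxProd_adj.mpr (Or.inl ⟨pathGraph_adj.mpr (Or.inr (by simp; omega)), rfl⟩)
    · rw [col_mk, colF_symm, colF_col n (v.1.val-1) v.1.val v.2.val (by omega), if_pos hp]
      omega
  · -- up edge, i-1 odd
    refine ⟨s(v, (⟨v.1.val-1, by omega⟩, v.2)), (mem_edgeSet _).mpr ?_, Sym2.mem_mk_left _ _, ?_⟩
    · exact boxProd_adj.mpr (Or.inl ⟨pathGraph_adj.mpr (Or.inr (by simp; omega)), rfl⟩)
    · rw [col_mk, colF_symm, colF_col n (v.1.val-1) v.1.val v.2.val (by omega), if_neg (by omega)]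
      omega

lemma cover (n v : ℕ) (hn : 2 ≤ n) (h1 : 1 ≤ v) (h2 : v ≤ 2*n+2) :
    ∃ j, j < 2*n ∧ (gam n j = v ∨ pii n j = v) := by
  by_cases hv1 : v = 1
  · exact ⟨0, by omega, Or.inr (by unfold pii; rw [if_pos rfl]; omega)⟩
  by_cases hv2 : v = 2*n+2
  · refine ⟨n, by omega, Or.inr ?_⟩
    unfold pii
    rw [if_neg (by omega), if_neg (by omega), if_pos rfl]; omega
  rcases Nat.even_or_odd v with ⟨w, hw⟩ | ⟨w, hw⟩
  · refine ⟨v/2 - 1, by omega, Or.inl ?_⟩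
    unfold gam
    rw [if_pos (by omega)]; omega
  · refine ⟨2*n-1-(v-3)/2, by omega, Or.inl ?_⟩
    unfold gam
    rw [if_neg (by omega)]; omega

lemma tri' (n j : ℕ) (hn : 2 ≤ n) (hj : j < 2*n) :
    (gam n (prv n j) ≠ gam n j ∧ gam n (prv n j) ≠ pii n j ∧ gam n j ≠ pii n j) ∧
    (ell n j ≤ gam n (prv n j) ∧ gam n (prv n j) ≤ ell n j + 2 ∧
     ell n j ≤ gam n j ∧ gam n j ≤ ell n j + 2 ∧
     ell n j ≤ pii n j ∧ pii n j ≤ ell n j + 2) ∧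
    (1 ≤ ell n j ∧ ell n j ≤ 2*n) := by
  simp only [gam, pii, prv, ell, Nat.min_def]
  split_ifs <;> omega

lemma cond1 (m n : ℕ) (hm : 1 ≤ m) (hn : 2 ≤ n) :
    ∀ e ∈ (pathGraph (2*m) □ cycleGraph (2*n)).edgeSet,
      col m n e ∈ Finset.Icc 1 (4*m+2*n-2) := by
  have main : ∀ a b : Fin (2*m) × Fin (2*n),
      s(a,b) ∈ (pathGraph (2*m) □ cycleGraph (2*n)).edgeSet →
      col m n s(a,b) ∈ Finset.Icc 1 (4*m+2*n-2) := by
    intro a b he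
    have h := nbr m n hn a b ((mem_edgeSet _).mp he)
    have ht := tri' n a.2.val hn a.2.isLt
    have h1 := a.1.isLt
    have h2 := b.1.isLt
    rw [Finset.mem_Icc]
    omega
  intro e
  induction e using Sym2.ind with
  | _ a b => exact main a b

set_option maxHeartbeats 1000000 in
lemma cond2 (m n : ℕ) (hm : 1 ≤ m) (hn : 2 ≤ n) :
    ∀ e₁ ∈ (pathGraph (2*m) □ cycleGraph (2*n)).edgeSet,
    ∀ e₂ ∈ (pathGraph (2*m) □ cycleGraph (2*n)).edgeSet,
      e₁ ≠ e₂ → (∃ v, v ∈ e₁ ∧ v ∈ e₂) → col m n e₁ ≠ col m n e₂ := by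
  intro e1 he1 e2 he2 hne ⟨v, hv1, hv2⟩
  obtain ⟨w1, ha1, rfl⟩ := esplit m n e1 he1 v hv1
  obtain ⟨w2, ha2, rfl⟩ := esplit m n e2 he2 v hv2
  have hn1 := nbr m n hn v w1 ha1
  have hn2 := nbr m n hn v w2 ha2
  have ht := tri' n v.2.val hn v.2.isLt
  have hne' : w1.1.val ≠ w2.1.val ∨ w1.2.val ≠ w2.2.val := by
    by_contra hcon
    push_neg at hcon
    exact hne (by rw [Prod.ext (Fin.ext hcon.1) (Fin.ext hcon.2)])
  have l1 := v.1.isLt; have l2 := v.2.isLt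
  have l3 := w1.1.isLt; have l4 := w1.2.isLt
  have l5 := w2.1.isLt; have l6 := w2.2.isLt
  rcases hn1 with ⟨y1, y2, y3⟩|⟨y1, y2, y3⟩|⟨y1, y2, ⟨y3, y4⟩|⟨y3, y4⟩⟩|⟨y1, y2, ⟨y3, y4⟩|⟨y3, y4⟩⟩ <;>
    rcases hn2 with ⟨z1, z2, z3⟩|⟨z1, z2, z3⟩|⟨z1, z2, ⟨z3, z4⟩|⟨z3, z4⟩⟩|⟨z1, z2, ⟨z3, z4⟩|⟨z3, z4⟩⟩ <;>
    omega

lemma cond3 (m n : ℕ) (hm : 1 ≤ m) (hn : 2 ≤ n) :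
    ∀ k ∈ Finset.Icc 1 (4*m+2*n-2),
      ∃ e ∈ (pathGraph (2*m) □ cycleGraph (2*n)).edgeSet, col m n e = k := by
  intro k hk
  rw [Finset.mem_Icc] at hk
  have hr : ∃ r, r + 1 ≤ m ∧ 1 ≤ k - 4*r ∧ k - 4*r ≤ 2*n+2 := by
    rcases le_or_gt k (4*(m-1)) with hc | hc
    · exact ⟨(k-1)/4, by omega, by omega, by omega⟩
    · exact ⟨m-1, by omega, by omega, by omega⟩
  obtain ⟨r, hr1, hr2, hr3⟩ := hr
  obtain ⟨j, hj, hgp⟩ := cover n (k - 4*r) hn hr2 hr3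
  rcases hgp with hg | hp
  · obtain ⟨e, he, _, hc⟩ := realize m n hm hn (⟨2*r, by omega⟩, ⟨j, hj⟩) k
      (Or.inl (by
        rw [show ((⟨j, hj⟩ : Fin (2*n)) : ℕ) = j from rfl,
          show ((⟨2*r, by omega⟩ : Fin (2*m)) : ℕ) = 2*r from rfl]
        omega))
    exact ⟨e, he, hc⟩
  · obtain ⟨e, he, _, hc⟩ := realize m n hm hn (⟨2*r, by omega⟩, ⟨j, hj⟩) k
      (Or.inr (Or.inr (Or.inl (by
        rw [show ((⟨j, hj⟩ : Fin (2*n)) : ℕ) = j from rfl,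
          show ((⟨2*r, by omega⟩ : Fin (2*m)) : ℕ) = 2*r from rfl]
        omega))))
    exact ⟨e, he, hc⟩

set_option maxHeartbeats 1000000 in
lemma cond4 (m n : ℕ) (hm : 1 ≤ m) (hn : 2 ≤ n) :
    ∀ v : Fin (2*m) × Fin (2*n), ∀ k₁ k₂ k : ℕ,
      (∃ e ∈ (pathGraph (2*m) □ cycleGraph (2*n)).edgeSet, v ∈ e ∧ col m n e = k₁) →
      (∃ e ∈ (pathGraph (2*m) □ cycleGraph (2*n)).edgeSet, v ∈ e ∧ col m n e = k₂) →
      k₁ ≤ k → k ≤ k₂ →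
      ∃ e ∈ (pathGraph (2*m) □ cycleGraph (2*n)).edgeSet, v ∈ e ∧ col m n e = k := by
  intro v k1 k2 k h1 h2 hk1 hk2
  obtain ⟨e1, he1, hv1, hc1⟩ := h1
  obtain ⟨e2, he2, hv2, hc2⟩ := h2
  obtain ⟨w1, ha1, rfl⟩ := esplit m n e1 he1 v hv1
  obtain ⟨w2, ha2, rfl⟩ := esplit m n e2 he2 v hv2
  have hn1 := nbr m n hn v w1 ha1
  have hn2 := nbr m n hn v w2 ha2
  have ht := tri' n v.2.val hn v.2.isLt
  have l1 := v.1.isLt; have l2 := v.2.isLt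
  have l3 := w1.1.isLt; have l5 := w2.1.isLt
  apply realize m n hm hn v k
  set g1 := gam n v.2.val with hg1
  set g2 := gam n (prv n v.2.val) with hg2
  set p0 := pii n v.2.val with hp0
  set L := ell n v.2.val with hL
  set i := v.1.val with hiv
  set B := 4*(i/2) with hB
  have w1b : (i = 0 → L ≤ k1 ∧ k1 ≤ L+2) ∧
      (i % 2 = 0 ∧ 0 < i → B+L-1 ≤ k1 ∧ k1 ≤ B+L+2) ∧
      (i % 2 = 1 ∧ i+1 < 2*m → B+L ≤ k1 ∧ k1 ≤ B+L+3) ∧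
      (i % 2 = 1 ∧ i+1 = 2*m → B+L ≤ k1 ∧ k1 ≤ B+L+2) := by
    rcases hn1 with ⟨y1, y2, y3⟩|⟨y1, y2, y3⟩|⟨y1, y2, ⟨y3, y4⟩|⟨y3, y4⟩⟩|⟨y1, y2, ⟨y3, y4⟩|⟨y3, y4⟩⟩ <;> omega
  have w2b : (i = 0 → L ≤ k2 ∧ k2 ≤ L+2) ∧
      (i % 2 = 0 ∧ 0 < i → B+L-1 ≤ k2 ∧ k2 ≤ B+L+2) ∧
      (i % 2 = 1 ∧ i+1 < 2*m → B+L ≤ k2 ∧ k2 ≤ B+L+3) ∧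
      (i % 2 = 1 ∧ i+1 = 2*m → B+L ≤ k2 ∧ k2 ≤ B+L+2) := by
    rcases hn2 with ⟨y1, y2, y3⟩|⟨y1, y2, y3⟩|⟨y1, y2, ⟨y3, y4⟩|⟨y3, y4⟩⟩|⟨y1, y2, ⟨y3, y4⟩|⟨y3, y4⟩⟩ <;> omega
  clear hn1 hn2 hc1 hc2
  have hc : i = 0 ∨ (i % 2 = 0 ∧ 0 < i) ∨ (i % 2 = 1 ∧ i+1 < 2*m) ∨ (i % 2 = 1 ∧ i+1 = 2*m) := by omega
  rcases hc with hc | hc | hc | hc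
  · have b1 := w1b.1 hc; have b2 := w2b.1 hc
    clear w1b w2b
    have h : k = g1 + 4*(i/2) ∨ k = g2 + 4*(i/2) ∨ k = p0 + 4*(i/2) := by omega
    rcases h with h|h|h
    exacts [Or.inl h, Or.inr (Or.inl h), Or.inr (Or.inr (Or.inl ⟨by omega, by omega, h⟩))]
  · have b1 := w1b.2.1 hc; have b2 := w2b.2.1 hc
    clear w1b w2b
    have h : k = g1 + 4*(i/2) ∨ k = g2 + 4*(i/2) ∨ k = p0 + 4*(i/2) ∨ k = L + 3 + 4*((i-1)/2) := by omega
    rcases h with h|h|h|h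
    exacts [Or.inl h, Or.inr (Or.inl h), Or.inr (Or.inr (Or.inl ⟨by omega, by omega, h⟩)),
      Or.inr (Or.inr (Or.inr (Or.inr (Or.inr ⟨by omega, by omega, h⟩))))]
  · have b1 := w1b.2.2.1 hc; have b2 := w2b.2.2.1 hc
    clear w1b w2b
    have h : k = g1 + 4*(i/2) ∨ k = g2 + 4*(i/2) ∨ k = p0 + 4*((i-1)/2) ∨ k = L + 3 + 4*(i/2) := by omega
    rcases h with h|h|h|h
    exacts [Or.inl h, Or.inr (Or.inl h),
      Or.inr (Or.inr (Or.inr (Or.inr (Or.inl ⟨by omega, by omega, h⟩)))),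
      Or.inr (Or.inr (Or.inr (Or.inl ⟨by omega, by omega, h⟩)))]
  · have b1 := w1b.2.2.2 hc; have b2 := w2b.2.2.2 hc
    clear w1b w2b
    have h : k = g1 + 4*(i/2) ∨ k = g2 + 4*(i/2) ∨ k = p0 + 4*((i-1)/2) := by omega
    rcases h with h|h|h
    exacts [Or.inl h, Or.inr (Or.inl h),
      Or.inr (Or.inr (Or.inr (Or.inr (Or.inl ⟨by omega, by omega, h⟩))))]

theorem stmt13 (m n : ℕ) (hm : 1 ≤ m) (hn : 2 ≤ n) :
    HasIntervalColoring (pathGraph (2 * m) □ cycleGraph (2 * n)) (4 * m + 2 * n - 2) ∧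
    4 * m + 2 * n - 2 ≤ Wsup (pathGraph (2 * m) □ cycleGraph (2 * n)) := by
  have hcol : HasIntervalColoring (pathGraph (2*m) □ cycleGraph (2*n)) (4*m+2*n-2) :=
    ⟨col m n, cond1 m n hm hn, cond2 m n hm hn, cond3 m n hm hn, cond4 m n hm hn⟩
  refine ⟨hcol, le_csSup ?_ hcol⟩
  classical
  refine ⟨(Set.toFinite (pathGraph (2*m) □ cycleGraph (2*n)).edgeSet).toFinset.card,
    fun t ht => ?_⟩
  obtain ⟨c, hc1, hc2, hc3, hc4⟩ := ht
  rcases Nat.eq_zero_or_pos t with rfl | hpos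
  · exact Nat.zero_le _
  have hfm : ∀ k ∈ Finset.Icc 1 t,
      (if h : ∃ e ∈ (pathGraph (2*m) □ cycleGraph (2*n)).edgeSet, c e = k then h.choose
       else s(((⟨0, by omega⟩ : Fin (2*m)), (⟨0, by omega⟩ : Fin (2*n))),
              ((⟨0, by omega⟩ : Fin (2*m)), (⟨0, by omega⟩ : Fin (2*n))))) ∈
        (Set.toFinite (pathGraph (2*m) □ cycleGraph (2*n)).edgeSet).toFinset := by
    intro k hk
    have hex := hc3 k hk
    rw [dif_pos hex]
    exact (Set.Finite.mem_toFinset _).mpr hex.choose_spec.1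
  have hfc : ∀ k ∈ Finset.Icc 1 t,
      c (if h : ∃ e ∈ (pathGraph (2*m) □ cycleGraph (2*n)).edgeSet, c e = k then h.choose
       else s(((⟨0, by omega⟩ : Fin (2*m)), (⟨0, by omega⟩ : Fin (2*n))),
              ((⟨0, by omega⟩ : Fin (2*m)), (⟨0, by omega⟩ : Fin (2*n))))) = k := by
    intro k hk
    have hex := hc3 k hk
    rw [dif_pos hex]
    exact hex.choose_spec.2
  have hinj : Set.InjOn
      (fun k => (if h : ∃ e ∈ (pathGraph (2*m) □ cycleGraph (2*n)).edgeSet, c e = k then h.choose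
       else s(((⟨0, by omega⟩ : Fin (2*m)), (⟨0, by omega⟩ : Fin (2*n))),
              ((⟨0, by omega⟩ : Fin (2*m)), (⟨0, by omega⟩ : Fin (2*n))))))
      (Finset.Icc 1 t) := by
    intro a ha b hb hab
    rw [Finset.mem_coe] at ha hb
    have h1 := hfc a ha
    have h2 := hfc b hb
    simp only at hab
    rw [← h1, ← h2, hab]
  have hcard := Finset.card_le_card_of_injOn _ hfm hinj
  have hicc : (Finset.Icc 1 t).card = t := by rw [Nat.card_Icc]; omega
  omega
end

section
/- For every m ≥ 2 and n ≥ 1 with m even, the torus T(2m, 2n+1) = C_{2m} □ C_{2n+1} admits an interval (2m + 2n + 3)-coloring, and with m odd it admits an interval (2m + 2n + 2)-coloring. -/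
open SimpleGraph

namespace IC

def A (n j : ℕ) : ℕ := min (2*j+1) (4*n+2-2*j)
def Hf (n j : ℕ) : ℕ := min (2*j+3) (4*n+2-2*j)
def If' (n j : ℕ) : ℕ := if j = 0 then 1 else if j < n then 2*j+2 else min (2*n+3) (4*n+3-2*j)
def mnt (m k : ℕ) : ℕ := min (k % m) (m - k % m)
def eo (m i : ℕ) : ℕ :=
  if i % 2 = 0 then min (mnt m ((i/2 + (m-1)) % m)) (mnt m (i/2))
  else min (mnt m (i/2)) (mnt m ((i/2 + 1) % m))
def hcol (m n i j : ℕ) : ℕ := Hf n j + 4 * mnt m (i/2)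
def vcol (m n i j : ℕ) : ℕ :=
  if i % 2 = 0 then If' n j + 4 * mnt m (i/2)
  else A n j + 3 + 4 * min (mnt m (i/2)) (mnt m ((i/2 + 1) % m))
def lo (m n i j : ℕ) : ℕ := min (A n j + 4 * mnt m (i/2)) (A n j + 3 + 4 * eo m i)
def T (m n : ℕ) : ℕ := if m % 2 = 0 then 2*m+2*n+3 else 2*m+2*n+2

lemma mod2 {d N : ℕ} (h0 : 0 < N) (h : d < 2*N) : d % N = if d < N then d else d - N := by
  split_ifs with h1
  · exact Nat.mod_eq_of_lt h1
  · rw [Nat.mod_eq_sub_mod (by omega)]; exact Nat.mod_eq_of_lt (by omega)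

lemma mnt_eq {m k : ℕ} (h : k < m) : mnt m k = min k (m - k) := by
  unfold mnt; rw [Nat.mod_eq_of_lt h]

lemma J {n j : ℕ} (hn : 1 ≤ n) (hj : j < 2*n+1) :
    (Hf n ((j+2*n) % (2*n+1)) = A n j + 1 ∧ Hf n j = A n j + 2 ∧ If' n j = A n j) ∨
    (Hf n ((j+2*n) % (2*n+1)) = A n j ∧ Hf n j = A n j + 2 ∧ If' n j = A n j + 1) ∨
    (Hf n ((j+2*n) % (2*n+1)) = A n j ∧ Hf n j = A n j + 1 ∧ If' n j = A n j + 2) ∨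
    (Hf n ((j+2*n) % (2*n+1)) = A n j + 2 ∧ Hf n j = A n j ∧ If' n j = A n j + 1) := by
  rcases Nat.eq_zero_or_pos j with h0 | h1
  · subst h0
    have hjl : (0+2*n) % (2*n+1) = 2*n := by
      rw [Nat.zero_add]; exact Nat.mod_eq_of_lt (by omega)
    rw [hjl]; unfold Hf A If'; split_ifs <;> omega
  · have hjl : (j+2*n) % (2*n+1) = j - 1 := by
      have h2 : j + 2*n = (j-1) + 1*(2*n+1) := by omega
      rw [h2, Nat.add_mul_mod_self_right]
      exact Nat.mod_eq_of_lt (by omega)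
    rw [hjl]; unfold Hf A If'; split_ifs <;> omega

lemma mnt_le {m : ℕ} (k : ℕ) (hm : 1 ≤ m) : 2 * mnt m k ≤ m := by
  unfold mnt
  have := Nat.mod_lt k (show 0 < m by omega)
  omega

lemma adj_mnt {m k k' : ℕ} (hm : 2 ≤ m) (hk : k < m) (hk' : k' < m)
    (h : k' + 1 = k ∨ k + 1 = k' ∨ (k = 0 ∧ k' = m-1) ∨ (k' = 0 ∧ k = m-1)) :
    (min (mnt m k') (mnt m k) = mnt m k ∨ min (mnt m k') (mnt m k) + 1 = mnt m k) ∧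
      2 * min (mnt m k') (mnt m k) + 1 ≤ m := by
  rw [mnt_eq hk, mnt_eq hk']; omega

lemma eo_spec {m i : ℕ} (hm : 2 ≤ m) (hi : i < 2*m) :
    (eo m i = mnt m (i/2) ∨ eo m i + 1 = mnt m (i/2)) ∧ 2 * eo m i + 1 ≤ m := by
  have hk : i/2 < m := by omega
  unfold eo
  by_cases hp : i % 2 = 0
  · rw [if_pos hp]
    rcases Nat.eq_zero_or_pos (i/2) with h0 | h0
    · have hk' : (i/2 + (m-1)) % m = m-1 := by
        rw [h0]; simp only [Nat.zero_add]; exact Nat.mod_eq_of_lt (by omega)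
      rw [hk']
      exact adj_mnt hm hk (by omega) (by omega)
    · have hk' : (i/2 + (m-1)) % m = i/2 - 1 := by
        have h2 : i/2 + (m-1) = (i/2-1) + 1*m := by omega
        rw [h2, Nat.add_mul_mod_self_right]
        exact Nat.mod_eq_of_lt (by omega)
      rw [hk']
      exact adj_mnt hm hk (by omega) (by omega)
  · rw [if_neg hp, Nat.min_comm]
    rcases eq_or_ne (i/2 + 1) m with h0 | h0
    · have hk' : (i/2 + 1) % m = 0 := by rw [h0, Nat.mod_self]
      rw [hk']
      exact adj_mnt hm hk (by omega) (by omega)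
    · have hk' : (i/2 + 1) % m = i/2 + 1 := Nat.mod_eq_of_lt (by omega)
      rw [hk']
      exact adj_mnt hm hk (by omega) (by omega)


lemma T_eq (m n : ℕ) : T m n = 2*m+2*n+2 + (1 - m % 2) := by
  unfold T; split_ifs <;> omega

lemma pal {m n : ℕ} (hm : 2 ≤ m) (hn : 1 ≤ n) (i j : ℕ) (hi : i < 2*m) (hj : j < 2*n+1) :
    (1 ≤ lo m n i j ∧ lo m n i j + 3 ≤ T m n) ∧
    (∀ d : ℕ, (lo m n i j ≤ d ∧ d ≤ lo m n i j + 3) ↔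
      (d = hcol m n i ((j+2*n) % (2*n+1)) ∨ d = hcol m n i j ∨ d = vcol m n i j ∨
       d = vcol m n ((i+(2*m-1)) % (2*m)) j)) ∧
    (hcol m n i ((j+2*n) % (2*n+1)) ≠ hcol m n i j ∧
     hcol m n i ((j+2*n) % (2*n+1)) ≠ vcol m n i j ∧
     hcol m n i ((j+2*n) % (2*n+1)) ≠ vcol m n ((i+(2*m-1)) % (2*m)) j ∧
     hcol m n i j ≠ vcol m n i j ∧
     hcol m n i j ≠ vcol m n ((i+(2*m-1)) % (2*m)) j ∧
     vcol m n i j ≠ vcol m n ((i+(2*m-1)) % (2*m)) j) := by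
  have hk : i / 2 < m := by omega
  have hJ := J hn hj
  obtain ⟨hEo1, hEo2⟩ := eo_spec hm hi
  have hmnt2 : 2 * mnt m (i/2) ≤ m := mnt_le _ (by omega)
  have hA1 : 1 ≤ A n j := by unfold A; omega
  have hA2 : A n j ≤ 2*n+1 := by unfold A; omega
  have hT := T_eq m n
  have hvd_vu : (vcol m n i j = If' n j + 4 * mnt m (i/2) ∧
      vcol m n ((i+(2*m-1)) % (2*m)) j = A n j + 3 + 4 * eo m i) ∨
      (vcol m n i j = A n j + 3 + 4 * eo m i ∧
      vcol m n ((i+(2*m-1)) % (2*m)) j = If' n j + 4 * mnt m (i/2)) := by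
    by_cases hp : i % 2 = 0
    · left
      refine ⟨by unfold vcol; rw [if_pos hp], ?_⟩
      rcases Nat.eq_zero_or_pos i with h0 | h0
      · have hi' : (i+(2*m-1)) % (2*m) = 2*m-1 := by
          rw [h0, Nat.zero_add]; exact Nat.mod_eq_of_lt (by omega)
        rw [hi']
        unfold vcol eo
        rw [if_neg (by omega), if_pos hp]
        have e1 : (2*m-1)/2 = m-1 := by omega
        have e2 : ((2*m-1)/2 + 1) % m = 0 := by
          rw [e1]
          have : m - 1 + 1 = m := by omega
          rw [this, Nat.mod_self]
        have e3 : (i/2 + (m-1)) % m = m-1 := by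
          rw [h0]; simp only [Nat.zero_div, Nat.zero_add]
          exact Nat.mod_eq_of_lt (by omega)
        rw [e2, e1, e3, h0]
      · have hi' : (i+(2*m-1)) % (2*m) = i-1 := by
          have h2 : i + (2*m-1) = (i-1) + 1*(2*m) := by omega
          rw [h2, Nat.add_mul_mod_self_right]
          exact Nat.mod_eq_of_lt (by omega)
        rw [hi']
        unfold vcol eo
        rw [if_neg (by omega), if_pos hp]
        have e1 : (i-1)/2 = i/2 - 1 := by omega
        have e2 : ((i-1)/2 + 1) % m = i/2 := by
          rw [e1]
          have : i/2 - 1 + 1 = i/2 := by omega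
          rw [this]; exact Nat.mod_eq_of_lt hk
        have e3 : (i/2 + (m-1)) % m = i/2 - 1 := by
          have h2 : i/2 + (m-1) = (i/2-1) + 1*m := by omega
          rw [h2, Nat.add_mul_mod_self_right]
          exact Nat.mod_eq_of_lt (by omega)
        rw [e2, e1, e3]
    · right
      constructor
      · unfold vcol eo
        rw [if_neg hp, if_neg hp]
      · have hi' : (i+(2*m-1)) % (2*m) = i-1 := by
          have h2 : i + (2*m-1) = (i-1) + 1*(2*m) := by omega
          rw [h2, Nat.add_mul_mod_self_right]
          exact Nat.mod_eq_of_lt (by omega)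
        rw [hi']
        unfold vcol
        rw [if_pos (by omega)]
        have e1 : (i-1)/2 = i/2 := by omega
        rw [e1]
  simp only [lo, hcol] at *
  rcases hvd_vu with ⟨hd, hu⟩ | ⟨hd, hu⟩ <;>
    rcases hJ with ⟨j1,j2,j3⟩ | ⟨j1,j2,j3⟩ | ⟨j1,j2,j3⟩ | ⟨j1,j2,j3⟩ <;>
    rcases hEo1 with he | he <;>
    exact ⟨⟨by omega, by omega⟩, fun d => by omega,
      by omega, by omega, by omega, by omega, by omega, by omega⟩


lemma cov {m n : ℕ} (hm : 2 ≤ m) (hn : 1 ≤ n) (x : ℕ) (h1 : 1 ≤ x) (h2 : x ≤ T m n) :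
    ∃ i j, i < 2*m ∧ j < 2*n+1 ∧ lo m n i j ≤ x ∧ x ≤ lo m n i j + 3 := by
  have hT := T_eq m n
  by_cases hx : x < 2*m - m % 2
  · -- ascending family: i = 2k+1, j ∈ {0,1}
    set k := (x-1)/4 with hkdef
    set j := (x - 4*k - 1)/2 with hjdef
    have hkb : 2*k+2 ≤ m := by omega
    have hjb : j ≤ 1 := by omega
    refine ⟨2*k+1, j, by omega, by omega, ?_, ?_⟩ <;>
    · have hio : (2*k+1) % 2 = 1 := by omega
      have hid : (2*k+1) / 2 = k := by omega
      unfold lo eo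
      rw [if_neg (by omega), hid]
      have e1 : (k+1) % m = k+1 := Nat.mod_eq_of_lt (by omega)
      rw [e1, mnt_eq (by omega), mnt_eq (by omega)]
      unfold A
      omega
  · -- peak family: i = m
    set j := min n ((x - (2*m - m % 2))/2) with hjdef
    have hjn : j ≤ n := by omega
    refine ⟨m, j, by omega, by omega, ?_, ?_⟩ <;>
    · unfold lo eo
      by_cases hp : m % 2 = 0
      · rw [if_pos (by omega)]
        have hid : m / 2 * 2 = m := by omega
        have e3 : (m/2 + (m-1)) % m = m/2 - 1 := by
          have h2 : m/2 + (m-1) = (m/2-1) + 1*m := by omega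
          rw [h2, Nat.add_mul_mod_self_right]
          exact Nat.mod_eq_of_lt (by omega)
        rw [e3, mnt_eq (by omega), mnt_eq (by omega)]
        unfold A
        omega
      · rw [if_neg (by omega)]
        have e1 : (m/2 + 1) % m = m/2 + 1 := Nat.mod_eq_of_lt (by omega)
        rw [e1, mnt_eq (by omega), mnt_eq (by omega)]
        unfold A
        omega


def eidx (N a b : ℕ) : ℕ :=
  if a + 1 = b then a else if b + 1 = a then b
  else if a = 0 ∧ b = N - 1 then b else if b = 0 ∧ a = N - 1 then a else min a b

lemma eidx_comm (N a b : ℕ) : eidx N a b = eidx N b a := by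
  unfold eidx; split_ifs <;> omega

lemma eidx_succ {N a : ℕ} (hN : 3 ≤ N) (ha : a < N) : eidx N a ((a+1) % N) = a := by
  rcases eq_or_ne (a+1) N with h | h
  · have h0 : (a+1) % N = 0 := by rw [h, Nat.mod_self]
    rw [h0]; unfold eidx; split_ifs <;> omega
  · have hlt : (a+1) % N = a+1 := Nat.mod_eq_of_lt (by omega)
    rw [hlt]; unfold eidx; split_ifs <;> omega

def fcol (m n : ℕ) (u v : Fin (2*m) × Fin (2*n+1)) : ℕ :=
  if u.1 = v.1 then hcol m n u.1.val (eidx (2*n+1) u.2.val v.2.val)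
  else vcol m n (eidx (2*m) u.1.val v.1.val) (min u.2.val v.2.val)

lemma fcol_comm (m n : ℕ) (u v : Fin (2*m) × Fin (2*n+1)) : fcol m n u v = fcol m n v u := by
  unfold fcol
  rcases eq_or_ne u.1 v.1 with h | h
  · rw [if_pos h, if_pos h.symm, h, eidx_comm]
  · rw [if_neg h, if_neg (Ne.symm h), eidx_comm, Nat.min_comm]

def cc (m n : ℕ) : Sym2 (Fin (2*m) × Fin (2*n+1)) → ℕ :=
  Sym2.lift ⟨fcol m n, fun a b => fcol_comm m n a b⟩

lemma cc_mk (m n : ℕ) (u v : Fin (2*m) × Fin (2*n+1)) : cc m n s(u, v) = fcol m n u v := rfl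

lemma sub_val_one {N : ℕ} (hN : 2 ≤ N) (u w : Fin N) :
    (w - u).val = 1 ↔ w.val = (u.val+1) % N := by
  have hu := u.isLt; have hw := w.isLt
  rw [Fin.sub_def]
  show (N - u.val + w.val) % N = 1 ↔ _
  have e1 : (N - u.val + w.val) % N =
      if N - u.val + w.val < N then N - u.val + w.val else N - u.val + w.val - N :=
    mod2 (by omega) (by omega)
  have e2 : (u.val+1) % N = if u.val+1 < N then u.val+1 else u.val+1-N :=
    mod2 (by omega) (by omega)
  rw [e1, e2]; split_ifs <;> omega

open SimpleGraph in
lemma adj_succ {N : ℕ} (hN : 3 ≤ N) (u w : Fin N) (h : w.val = (u.val+1) % N) :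
    (cycleGraph N).Adj u w :=
  cycleGraph_adj'.mpr (Or.inr ((sub_val_one (by omega) u w).mpr h))


open SimpleGraph in
lemma key {m n : ℕ} (hm : 2 ≤ m) (hn : 1 ≤ n) (v w : Fin (2*m) × Fin (2*n+1))
    (h : (cycleGraph (2*m) □ cycleGraph (2*n+1)).Adj v w) :
    (w.1 = v.1 ∧ w.2.val = (v.2.val+1) % (2*n+1) ∧
      cc m n s(v, w) = hcol m n v.1.val v.2.val) ∨
    (w.1 = v.1 ∧ w.2.val = (v.2.val+2*n) % (2*n+1) ∧
      cc m n s(v, w) = hcol m n v.1.val ((v.2.val+2*n) % (2*n+1))) ∨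
    (w.2 = v.2 ∧ w.1.val = (v.1.val+1) % (2*m) ∧
      cc m n s(v, w) = vcol m n v.1.val v.2.val) ∨
    (w.2 = v.2 ∧ w.1.val = (v.1.val+(2*m-1)) % (2*m) ∧
      cc m n s(v, w) = vcol m n ((v.1.val+(2*m-1)) % (2*m)) v.2.val) := by
  rw [SimpleGraph.boxProd_adj] at h
  rcases h with ⟨h1, h2⟩ | ⟨h1, h2⟩
  · -- vertical
    have hne : v.1 ≠ w.1 := h1.ne
    have hcc : cc m n s(v,w) = vcol m n (eidx (2*m) v.1.val w.1.val) (min v.2.val w.2.val) := by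
      rw [cc_mk]; unfold fcol; rw [if_neg hne]
    rw [← h2, Nat.min_self] at hcc
    have hw1 := w.1.isLt; have hv1 := v.1.isLt
    rw [SimpleGraph.cycleGraph_adj'] at h1
    rcases h1 with hs | hs
    · have hv : v.1.val = (w.1.val+1) % (2*m) := (sub_val_one (by omega) w.1 v.1).mp hs
      have hwv : w.1.val = (v.1.val + (2*m-1)) % (2*m) := by
        have e1 : (v.1.val + (2*m-1)) % (2*m) =
            if v.1.val + (2*m-1) < 2*m then v.1.val+(2*m-1) else v.1.val+(2*m-1) - 2*m :=
          mod2 (by omega) (by omega)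
        have e2 : (w.1.val + 1) % (2*m) =
            if w.1.val+1 < 2*m then w.1.val+1 else w.1.val+1-2*m :=
          mod2 (by omega) (by omega)
        rw [e1]
        split_ifs at e2 ⊢ <;> omega
      have heq : eidx (2*m) v.1.val w.1.val = w.1.val := by
        rw [eidx_comm, hv]; exact eidx_succ (by omega) hw1
      exact Or.inr (Or.inr (Or.inr ⟨h2.symm, hwv, by rw [hcc, heq, hwv]⟩))
    · have hw : w.1.val = (v.1.val+1) % (2*m) := (sub_val_one (by omega) v.1 w.1).mp hs
      have heq : eidx (2*m) v.1.val w.1.val = v.1.val := by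
        rw [hw]; exact eidx_succ (by omega) hv1
      exact Or.inr (Or.inr (Or.inl ⟨h2.symm, hw, by rw [hcc, heq]⟩))
  · -- horizontal
    have hcc : cc m n s(v,w) = hcol m n v.1.val (eidx (2*n+1) v.2.val w.2.val) := by
      rw [cc_mk]; unfold fcol; rw [if_pos h2]
    have hw2 := w.2.isLt; have hv2 := v.2.isLt
    rw [SimpleGraph.cycleGraph_adj'] at h1
    rcases h1 with hs | hs
    · have hv : v.2.val = (w.2.val+1) % (2*n+1) := (sub_val_one (by omega) w.2 v.2).mp hs
      have hwv : w.2.val = (v.2.val + 2*n) % (2*n+1) := by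
        have e1 : (v.2.val + 2*n) % (2*n+1) =
            if v.2.val + 2*n < 2*n+1 then v.2.val+2*n else v.2.val+2*n - (2*n+1) :=
          mod2 (by omega) (by omega)
        have e2 : (w.2.val + 1) % (2*n+1) =
            if w.2.val+1 < 2*n+1 then w.2.val+1 else w.2.val+1-(2*n+1) :=
          mod2 (by omega) (by omega)
        rw [e1]
        split_ifs at e2 ⊢ <;> omega
      have heq : eidx (2*n+1) v.2.val w.2.val = w.2.val := by
        rw [eidx_comm, hv]; exact eidx_succ (by omega) hw2
      exact Or.inr (Or.inl ⟨h2.symm, hwv, by rw [hcc, heq, hwv]⟩)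
    · have hw : w.2.val = (v.2.val+1) % (2*n+1) := (sub_val_one (by omega) v.2 w.2).mp hs
      have heq : eidx (2*n+1) v.2.val w.2.val = v.2.val := by
        rw [hw]; exact eidx_succ (by omega) hv2
      exact Or.inl ⟨h2.symm, hw, by rw [hcc, heq]⟩


open SimpleGraph

section Edges
variable {m n : ℕ} (hm : 2 ≤ m) (hn : 1 ≤ n) (v : Fin (2*m) × Fin (2*n+1))
include hm hn

lemma eR : ∃ e ∈ (cycleGraph (2*m) □ cycleGraph (2*n+1)).edgeSet,
    v ∈ e ∧ cc m n e = hcol m n v.1.val v.2.val := by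
  refine ⟨s(v, (v.1, ⟨(v.2.val+1) % (2*n+1), Nat.mod_lt _ (by omega)⟩)), ?_, ?_, ?_⟩
  · rw [mem_edgeSet, boxProd_adj]
    exact Or.inr ⟨adj_succ (by omega) v.2 _ rfl, rfl⟩
  · exact Sym2.mem_mk_left _ _
  · rw [cc_mk]; unfold fcol
    rw [if_pos rfl]
    have heq : eidx (2*n+1) v.2.val ((v.2.val+1) % (2*n+1)) = v.2.val :=
      eidx_succ (by omega) v.2.isLt
    rw [heq]

lemma eL : ∃ e ∈ (cycleGraph (2*m) □ cycleGraph (2*n+1)).edgeSet,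
    v ∈ e ∧ cc m n e = hcol m n v.1.val ((v.2.val+2*n) % (2*n+1)) := by
  have hlt : (v.2.val+2*n) % (2*n+1) < 2*n+1 := Nat.mod_lt _ (by omega)
  have hmod : ((v.2.val+2*n) % (2*n+1) + 1) % (2*n+1) = v.2.val := by
    have hv2 := v.2.isLt
    have e1 : (v.2.val+2*n) % (2*n+1) =
        if v.2.val+2*n < 2*n+1 then v.2.val+2*n else v.2.val+2*n-(2*n+1) :=
      mod2 (by omega) (by omega)
    rw [e1]
    split_ifs with h
    · have hv0 : v.2.val = 0 := by omega
      rw [hv0]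
      have : 0+2*n+1 = 2*n+1 := by omega
      rw [this, Nat.mod_self]
    · have : v.2.val+2*n-(2*n+1)+1 = v.2.val := by omega
      rw [this]
      exact Nat.mod_eq_of_lt hv2
  refine ⟨s(v, (v.1, ⟨(v.2.val+2*n) % (2*n+1), hlt⟩)), ?_, ?_, ?_⟩
  · rw [mem_edgeSet, boxProd_adj]
    exact Or.inr ⟨(adj_succ (by omega) _ v.2 hmod.symm).symm, rfl⟩
  · exact Sym2.mem_mk_left _ _
  · rw [cc_mk]; unfold fcol
    rw [if_pos rfl]
    have heq := eidx_succ (N := 2*n+1) (a := (v.2.val+2*n) % (2*n+1)) (by omega) hlt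
    rw [hmod] at heq
    rw [eidx_comm, heq]

lemma eD : ∃ e ∈ (cycleGraph (2*m) □ cycleGraph (2*n+1)).edgeSet,
    v ∈ e ∧ cc m n e = vcol m n v.1.val v.2.val := by
  have hlt : (v.1.val+1) % (2*m) < 2*m := Nat.mod_lt _ (by omega)
  have hnev : v.1.val ≠ (v.1.val+1) % (2*m) := by
    have hv1 := v.1.isLt
    have e1 : (v.1.val+1) % (2*m) =
        if v.1.val+1 < 2*m then v.1.val+1 else v.1.val+1-2*m := mod2 (by omega) (by omega)
    rw [e1]; split_ifs <;> omega
  refine ⟨s(v, (⟨(v.1.val+1) % (2*m), hlt⟩, v.2)), ?_, ?_, ?_⟩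
  · rw [mem_edgeSet, boxProd_adj]
    exact Or.inl ⟨adj_succ (by omega) v.1 _ rfl, rfl⟩
  · exact Sym2.mem_mk_left _ _
  · rw [cc_mk]; unfold fcol
    rw [if_neg (fun h => hnev (congrArg Fin.val h))]
    have heq : eidx (2*m) v.1.val ((v.1.val+1) % (2*m)) = v.1.val :=
      eidx_succ (by omega) v.1.isLt
    rw [heq, Nat.min_self]

lemma eU : ∃ e ∈ (cycleGraph (2*m) □ cycleGraph (2*n+1)).edgeSet,
    v ∈ e ∧ cc m n e = vcol m n ((v.1.val+(2*m-1)) % (2*m)) v.2.val := by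
  have hlt : (v.1.val+(2*m-1)) % (2*m) < 2*m := Nat.mod_lt _ (by omega)
  have hmod : ((v.1.val+(2*m-1)) % (2*m) + 1) % (2*m) = v.1.val := by
    have hv1 := v.1.isLt
    have e1 : (v.1.val+(2*m-1)) % (2*m) =
        if v.1.val+(2*m-1) < 2*m then v.1.val+(2*m-1) else v.1.val+(2*m-1)-2*m :=
      mod2 (by omega) (by omega)
    rw [e1]
    split_ifs with h
    · have hv0 : v.1.val = 0 := by omega
      rw [hv0]
      have : 0+(2*m-1)+1 = 2*m := by omega
      rw [this, Nat.mod_self]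
    · have : v.1.val+(2*m-1)-2*m+1 = v.1.val := by omega
      rw [this]
      exact Nat.mod_eq_of_lt hv1
  have hnev : v.1.val ≠ (v.1.val+(2*m-1)) % (2*m) := by
    have hv1 := v.1.isLt
    have e1 : (v.1.val+(2*m-1)) % (2*m) =
        if v.1.val+(2*m-1) < 2*m then v.1.val+(2*m-1) else v.1.val+(2*m-1)-2*m :=
      mod2 (by omega) (by omega)
    rw [e1]; split_ifs <;> omega
  refine ⟨s(v, (⟨(v.1.val+(2*m-1)) % (2*m), hlt⟩, v.2)), ?_, ?_, ?_⟩
  · rw [mem_edgeSet, boxProd_adj]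
    exact Or.inl ⟨(adj_succ (by omega) _ v.1 hmod.symm).symm, rfl⟩
  · exact Sym2.mem_mk_left _ _
  · rw [cc_mk]; unfold fcol
    rw [if_neg (fun h => hnev (congrArg Fin.val h))]
    have heq := eidx_succ (N := 2*m) (a := (v.1.val+(2*m-1)) % (2*m)) (by omega) hlt
    rw [hmod] at heq
    rw [eidx_comm, heq, Nat.min_self]

end Edges

lemma nbr {V : Type*} {G : SimpleGraph V} (v : V) :
    ∀ e, e ∈ G.edgeSet → v ∈ e → ∃ w, G.Adj v w ∧ e = s(v, w) := by
  intro e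
  induction e using Sym2.ind with
  | _ a b =>
    intro he hv
    rw [SimpleGraph.mem_edgeSet] at he
    rcases Sym2.mem_iff.mp hv with h | h
    · subst h; exact ⟨b, he, rfl⟩
    · subst h; exact ⟨a, he.symm, Sym2.eq_swap⟩

open SimpleGraph in
lemma main {m n : ℕ} (hm : 2 ≤ m) (hn : 1 ≤ n) :
    HasIntervalColoring (cycleGraph (2*m) □ cycleGraph (2*n+1)) (T m n) := by
  refine ⟨cc m n, ?_, ?_, ?_, ?_⟩
  · -- colors in range
    intro e
    induction e using Sym2.ind with
    | _ a b =>
      intro he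
      obtain ⟨⟨hb1, hb2⟩, hiff, _⟩ := pal hm hn a.1.val a.2.val a.1.isLt a.2.isLt
      rw [SimpleGraph.mem_edgeSet] at he
      rw [Finset.mem_Icc]
      rcases key hm hn a b he with ⟨_,_,hc⟩|⟨_,_,hc⟩|⟨_,_,hc⟩|⟨_,_,hc⟩ <;> rw [hc]
      · have hx := (hiff _).mpr (Or.inr (Or.inl rfl)); exact ⟨by omega, by omega⟩
      · have hx := (hiff _).mpr (Or.inl rfl); exact ⟨by omega, by omega⟩
      · have hx := (hiff _).mpr (Or.inr (Or.inr (Or.inl rfl))); exact ⟨by omega, by omega⟩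
      · have hx := (hiff _).mpr (Or.inr (Or.inr (Or.inr rfl))); exact ⟨by omega, by omega⟩
  · -- proper
    intro e1 he1 e2 he2 hne hshare
    obtain ⟨v, hv1, hv2⟩ := hshare
    obtain ⟨w1, ha1, rfl⟩ := nbr v e1 he1 hv1
    obtain ⟨w2, ha2, rfl⟩ := nbr v e2 he2 hv2
    obtain ⟨_, _, hd12, hd13, hd14, hd23, hd24, hd34⟩ :=
      pal hm hn v.1.val v.2.val v.1.isLt v.2.isLt
    rcases key hm hn v w1 ((SimpleGraph.mem_edgeSet _).mp he1) with
        ⟨p1,q1,c1⟩|⟨p1,q1,c1⟩|⟨p1,q1,c1⟩|⟨p1,q1,c1⟩ <;>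
      rcases key hm hn v w2 ((SimpleGraph.mem_edgeSet _).mp he2) with
        ⟨p2,q2,c2⟩|⟨p2,q2,c2⟩|⟨p2,q2,c2⟩|⟨p2,q2,c2⟩ <;>
      rw [c1, c2] <;>
      first
        | exact hd12 | exact hd13 | exact hd14 | exact hd23 | exact hd24 | exact hd34
        | exact hd12.symm | exact hd13.symm | exact hd14.symm
        | exact hd23.symm | exact hd24.symm | exact hd34.symm
        | exact fun _ => hne (by
            rw [show w1 = w2 from
              Prod.ext (p1.trans p2.symm) (Fin.val_injective (q1.trans q2.symm))])
        | exact fun _ => hne (by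
            rw [show w1 = w2 from
              Prod.ext (Fin.val_injective (q1.trans q2.symm)) (p1.trans p2.symm)])
  · -- all colors used
    intro x hx
    rw [Finset.mem_Icc] at hx
    obtain ⟨i, j, hi, hj, hl1, hl2⟩ := cov hm hn x hx.1 hx.2
    obtain ⟨_, hiff, _⟩ := pal hm hn i j hi hj
    rcases (hiff x).mp ⟨hl1, hl2⟩ with h|h|h|h
    · obtain ⟨e, he, _, hce⟩ := eL hm hn (⟨i,hi⟩, ⟨j,hj⟩)
      exact ⟨e, he, hce.trans h.symm⟩
    · obtain ⟨e, he, _, hce⟩ := eR hm hn (⟨i,hi⟩, ⟨j,hj⟩)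
      exact ⟨e, he, hce.trans h.symm⟩
    · obtain ⟨e, he, _, hce⟩ := eD hm hn (⟨i,hi⟩, ⟨j,hj⟩)
      exact ⟨e, he, hce.trans h.symm⟩
    · obtain ⟨e, he, _, hce⟩ := eU hm hn (⟨i,hi⟩, ⟨j,hj⟩)
      exact ⟨e, he, hce.trans h.symm⟩
  · -- interval condition
    intro v k1 k2 k h1 h2 hk1 hk2
    obtain ⟨e1, he1, hv1, hc1⟩ := h1
    obtain ⟨e2, he2, hv2, hc2⟩ := h2
    obtain ⟨w1, ha1, rfl⟩ := nbr v e1 he1 hv1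
    obtain ⟨w2, ha2, rfl⟩ := nbr v e2 he2 hv2
    obtain ⟨_, hiff, _⟩ := pal hm hn v.1.val v.2.val v.1.isLt v.2.isLt
    have hb1 : lo m n v.1.val v.2.val ≤ k1 ∧ k1 ≤ lo m n v.1.val v.2.val + 3 := by
      rcases key hm hn v w1 ((SimpleGraph.mem_edgeSet _).mp he1) with
          ⟨_,_,c⟩|⟨_,_,c⟩|⟨_,_,c⟩|⟨_,_,c⟩ <;> rw [← hc1, c]
      · exact (hiff _).mpr (Or.inr (Or.inl rfl))
      · exact (hiff _).mpr (Or.inl rfl)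
      · exact (hiff _).mpr (Or.inr (Or.inr (Or.inl rfl)))
      · exact (hiff _).mpr (Or.inr (Or.inr (Or.inr rfl)))
    have hb2 : lo m n v.1.val v.2.val ≤ k2 ∧ k2 ≤ lo m n v.1.val v.2.val + 3 := by
      rcases key hm hn v w2 ((SimpleGraph.mem_edgeSet _).mp he2) with
          ⟨_,_,c⟩|⟨_,_,c⟩|⟨_,_,c⟩|⟨_,_,c⟩ <;> rw [← hc2, c]
      · exact (hiff _).mpr (Or.inr (Or.inl rfl))
      · exact (hiff _).mpr (Or.inl rfl)
      · exact (hiff _).mpr (Or.inr (Or.inr (Or.inl rfl)))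
      · exact (hiff _).mpr (Or.inr (Or.inr (Or.inr rfl)))
    rcases (hiff k).mp ⟨by omega, by omega⟩ with h|h|h|h
    · obtain ⟨e, he, hve, hce⟩ := eL hm hn v
      exact ⟨e, he, hve, hce.trans h.symm⟩
    · obtain ⟨e, he, hve, hce⟩ := eR hm hn v
      exact ⟨e, he, hve, hce.trans h.symm⟩
    · obtain ⟨e, he, hve, hce⟩ := eD hm hn v
      exact ⟨e, he, hve, hce.trans h.symm⟩
    · obtain ⟨e, he, hve, hce⟩ := eU hm hn v
      exact ⟨e, he, hve, hce.trans h.symm⟩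

end IC

theorem stmt15 (m n : ℕ) (hm : 2 ≤ m) (hn : 1 ≤ n) :
    (Even m → HasIntervalColoring (cycleGraph (2 * m) □ cycleGraph (2 * n + 1))
      (2 * m + 2 * n + 3)) ∧
    (Odd m → HasIntervalColoring (cycleGraph (2 * m) □ cycleGraph (2 * n + 1))
      (2 * m + 2 * n + 2)) := by
  constructor
  · intro hpar
    have h := IC.main hm hn
    have hT : IC.T m n = 2*m+2*n+3 := by
      unfold IC.T; rw [if_pos (Nat.even_iff.mp hpar)]
    rwa [hT] at h
  · intro hpar
    have h := IC.main hm hn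
    have hT : IC.T m n = 2*m+2*n+2 := by
      unfold IC.T
      rw [if_neg (by have := Nat.odd_iff.mp hpar; omega)]
    rwa [hT] at h
end
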